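/- arXiv:math/0603227 — 3 statements merged into one kernel-verified Lean document; each statement's English description precedes it below -/
import Mathlib

section
/- Let M : [0,∞) × [0,∞) → [0,1] be continuous on {h > 0}, nondecreasing in each argument, differentiable in h for h > 0, and suppose for some constants φ, ψ > 0 and all h ∈ (0,1]: M(h) ≤ h·M'(h) + ψ·M(h)²·M'(h) + M(h)², where M(h) := M(β₀,h) and ' denotes d/dh. If lim_{h→0+} M(β₀,h)/h = ∞ and M(β₀,h) ≤ 1/2 for small h, then there is a constant c₁ > 0 such that M(β₀,h) ≥ c₁·h^{1/2} for all sufficiently small h > 0. -/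
open Filter

/-- One-variable reduction of the Aizenman–Barsky PDI analysis (case `a = 1`):
if `M` is nondecreasing, `[0,1]`-valued, continuous and differentiable for `h > 0`,
satisfies `M ≤ h M' + ψ M² M' + M²` on `(0,1]`, `M(h)/h → ∞` as `h → 0+`, and
`M ≤ 1/2` near `0`, then `M(h) ≥ c₁ √h` for small `h > 0`. -/
theorem stmt6 (M : ℝ → ℝ) (ψ : ℝ) (hψ : 0 < ψ)
    (hcont : ContinuousOn M (Set.Ioi 0))
    (hmono : MonotoneOn M (Set.Ici 0))
    (hrange : ∀ h ≥ (0:ℝ), M h ∈ Set.Icc (0:ℝ) 1)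
    (hdiff : ∀ h > (0:ℝ), DifferentiableAt ℝ M h)
    (hPDI : ∀ h ∈ Set.Ioc (0:ℝ) 1,
      M h ≤ h * deriv M h + ψ * (M h)^2 * deriv M h + (M h)^2)
    (hlim : Tendsto (fun h => M h / h) (nhdsWithin 0 (Set.Ioi 0)) atTop)
    (hsmall : ∃ h₀ > (0:ℝ), ∀ h ∈ Set.Ioc (0:ℝ) h₀, M h ≤ 1/2) :
    ∃ c₁ > (0:ℝ), ∃ h₁ > (0:ℝ), ∀ h ∈ Set.Ioc (0:ℝ) h₁, c₁ * Real.sqrt h ≤ M h := by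
  obtain ⟨h₀, hh₀, hM12⟩ := hsmall
  -- small intervals near 0 belong to the filter
  have hmemI : ∀ x > (0:ℝ), Set.Ioo (0:ℝ) x ∈ nhdsWithin (0:ℝ) (Set.Ioi 0) := by
    intro x hx
    apply mem_nhdsWithin.mpr
    exact ⟨Set.Iio x, isOpen_Iio, hx, fun y hy => ⟨hy.2, hy.1⟩⟩
  -- positivity of M on (0, ∞)
  have hMpos : ∀ x > (0:ℝ), 0 < M x := by
    intro x hx
    have hev : ∀ᶠ a in nhdsWithin (0:ℝ) (Set.Ioi 0), (1:ℝ) ≤ M a / a :=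
      hlim.eventually (eventually_ge_atTop 1)
    obtain ⟨a, ha1, ha2, ha3⟩ :=
      (hev.and (eventually_of_mem (hmemI x hx) (fun a ha => ha))).exists
    have hapos : (0:ℝ) < a := ha2
    have hMa : a ≤ M a := by
      have := (one_le_div hapos).mp ha1
      linarith
    have : M a ≤ M x := hmono (le_of_lt hapos) (le_of_lt hx) (le_of_lt ha3)
    linarith
  set F : ℝ → ℝ := fun x => x / M x - x - ψ * M x with hFdef
  -- F is antitone: F h ≤ F a for 0 < a ≤ h ≤ min h₀ 1
  have hkey : ∀ h, 0 < h → h ≤ 1 → ∀ a, 0 < a → a ≤ h → F h ≤ F a := by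
    intro h hh hh1 a ha hah
    have hanti : AntitoneOn F (Set.Icc a h) := by
      have hsub : Set.Icc a h ⊆ Set.Ioi (0:ℝ) := fun y hy => lt_of_lt_of_le ha hy.1
      have hFd : ∀ x ∈ Set.Ioo a h,
          HasDerivAt F ((1 * M x - x * deriv M x) / (M x)^2 - 1 - ψ * deriv M x) x := by
        intro x hx
        have hx0 : (0:ℝ) < x := lt_trans ha hx.1
        have hMd := (hdiff x hx0).hasDerivAt
        have hMne : M x ≠ 0 := (hMpos x hx0).ne'
        exact (((hasDerivAt_id x).div hMd hMne).sub (hasDerivAt_id x)).sub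
          (hMd.const_mul ψ)
      apply antitoneOn_of_deriv_nonpos (convex_Icc a h)
      · have h1 : ContinuousOn (fun x => x / M x) (Set.Icc a h) :=
          continuousOn_id.div (hcont.mono hsub)
            (fun y hy => (hMpos y (hsub hy)).ne')
        exact (h1.sub continuousOn_id).sub ((hcont.mono hsub).const_smul ψ)
      · intro x hx
        rw [interior_Icc] at hx
        exact (hFd x hx).differentiableAt.differentiableWithinAt
      · intro x hx
        rw [interior_Icc] at hx
        rw [(hFd x hx).deriv]
        have hx0 : (0:ℝ) < x := lt_trans ha hx.1
        have hx1 : x ≤ 1 := le_trans (le_of_lt hx.2) hh1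
        have hP := hPDI x ⟨hx0, hx1⟩
        have hMx : 0 < M x := hMpos x hx0
        have hdivle : (1 * M x - x * deriv M x) / (M x)^2 ≤ 1 + ψ * deriv M x := by
          rw [div_le_iff₀ (pow_pos hMx 2)]
          nlinarith [hP]
        linarith
    exact hanti (Set.left_mem_Icc.mpr hah) (Set.right_mem_Icc.mpr hah) hah
  -- F ≤ 0 on (0, 1]
  have hFle : ∀ h, 0 < h → h ≤ 1 → F h ≤ 0 := by
    intro h hh hh1
    have : ∀ ε > (0:ℝ), F h ≤ 0 + ε := by
      intro ε hε
      have hev : ∀ᶠ a in nhdsWithin (0:ℝ) (Set.Ioi 0), (1/ε : ℝ) ≤ M a / a :=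
        hlim.eventually (eventually_ge_atTop (1/ε))
      obtain ⟨a, ha1, ha2, ha3⟩ :=
        (hev.and (eventually_of_mem (hmemI h hh) (fun a ha => ha))).exists
      have hapos : (0:ℝ) < a := ha2
      have hMa : 0 < M a := hMpos a hapos
      have haM : a / M a ≤ ε := by
        rw [div_le_iff₀ hMa]
        have := (div_le_div_iff₀ hε hapos).mp ha1
        nlinarith
      have hFa : F a ≤ ε := by
        have : ψ * M a ≥ 0 := le_of_lt (mul_pos hψ hMa)
        simp only [hFdef]
        linarith
      have := hkey h hh hh1 a hapos (le_of_lt ha3)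
      linarith
    have := le_of_forall_pos_le_add this
    linarith
  -- conclusion
  refine ⟨(Real.sqrt (2*ψ))⁻¹, by positivity, min h₀ 1, lt_min hh₀ one_pos, ?_⟩
  intro h hh
  obtain ⟨hh', hh1⟩ := hh
  have hhle1 : h ≤ 1 := le_trans hh1 (min_le_right _ _)
  have hhle0 : h ≤ h₀ := le_trans hh1 (min_le_left _ _)
  have hMh : 0 < M h := hMpos h hh'
  have hF := hFle h hh' hhle1
  have hdiv : h / M h ≤ h + ψ * M h := by
    simp only [hFdef] at hF; linarith
  have hmul : h ≤ (h + ψ * M h) * M h := by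
    rw [div_le_iff₀ hMh] at hdiv; linarith
  have h12 : M h ≤ 1/2 := hM12 h ⟨hh', hhle0⟩
  have hsq : h ≤ 2 * ψ * (M h)^2 := by nlinarith
  have hsqrt : Real.sqrt h ≤ Real.sqrt (2*ψ) * M h := by
    have : Real.sqrt h ≤ Real.sqrt (2 * ψ * (M h)^2) := Real.sqrt_le_sqrt hsq
    rwa [Real.sqrt_mul (by positivity), Real.sqrt_sq (le_of_lt hMh)] at this
  have hs2 : (0:ℝ) < Real.sqrt (2*ψ) := Real.sqrt_pos.mpr (by positivity)
  rw [inv_mul_le_iff₀ hs2]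
  linarith [hsqrt]
end

section
/- Let (f_n) be a sequence of functions [0,∞)² → [0,1], each nondecreasing in each variable, converging pointwise to f. Suppose each f_n is continuously differentiable and satisfies ∂f_n/∂λ ≤ g·∂f_n/∂h pointwise, where g : [0,∞)² → [0,∞) is continuous. Then f is nondecreasing in each variable, the partial derivatives of f exist Lebesgue-almost everywhere, and ∂f/∂λ ≤ g·∂f/∂h holds at Lebesgue-almost every point where both partial derivatives exist, in the distributional sense: for every nonnegative smooth compactly supported test function φ on (0,∞)², -∫ f·∂φ/∂λ ≤ -∫ f·∂(gφ)/∂h + ∫ f·φ·(∂g/∂h) appropriately interpreted via integration by parts. -/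
open Filter MeasureTheory Set Topology

/-- Rational-slope Cauchy condition for a 1-variable function at a point. -/
def Cd (F : ℝ → ℝ) (x : ℝ) : Prop :=
  ∀ k : ℕ, ∃ m : ℕ, ∀ q q' : ℚ, (q:ℝ) ≠ 0 → (q':ℝ) ≠ 0 →
    |(q:ℝ)| < 1/(m+1) → |(q':ℝ)| < 1/(m+1) →
    |(F (x+q) - F x)/q - (F (x+q') - F x)/q'| ≤ 1/(k+1)

lemma mono_hasDerivAt_nonneg {φ : ℝ → ℝ} (hφ : Monotone φ) {d x : ℝ}
    (h : HasDerivAt φ d x) : 0 ≤ d := by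
  have ht : Tendsto (slope φ x) (𝓝[>] x) (𝓝 d) :=
    (hasDerivAt_iff_tendsto_slope.1 h).mono_left
      (nhdsWithin_mono x fun y hy => ne_of_gt hy)
  refine ge_of_tendsto ht ?_
  filter_upwards [self_mem_nhdsWithin] with y hy
  rw [slope_def_field]
  exact div_nonneg (sub_nonneg.2 (hφ (le_of_lt hy))) (sub_nonneg.2 (le_of_lt hy))

lemma mono_right_slope {φ : ℝ → ℝ} (hφ : Monotone φ) (x L : ℝ)
    (H : ∀ ε > 0, ∃ δ > 0, ∀ q : ℚ, 0 < (q:ℝ) → (q:ℝ) < δ → |(φ (x+q) - φ x)/q - L| ≤ ε) :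
    Tendsto (fun t : ℝ => (φ (x+t) - φ x)/t) (𝓝[>] 0) (𝓝 L) := by
  have hL : 0 ≤ L := by
    by_contra hneg
    push_neg at hneg
    obtain ⟨δ, hδ, hq⟩ := H (-L/2) (by linarith)
    obtain ⟨q, hq1, hq2⟩ := exists_rat_btwn hδ
    have h1 := hq q hq1 hq2
    have h2 : 0 ≤ (φ (x+q) - φ x)/q :=
      div_nonneg (sub_nonneg.2 (hφ (by linarith))) (le_of_lt hq1)
    rw [abs_le] at h1
    linarith [h1.1]
  rw [Metric.tendsto_nhdsWithin_nhds]
  intro ε hε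
  set ε₁ : ℝ := min (ε/4) 1 with hε₁def
  have hε₁pos : 0 < ε₁ := lt_min (by linarith) one_pos
  have hε₁a : ε₁ ≤ ε/4 := min_le_left _ _
  have hε₁b : ε₁ ≤ 1 := min_le_right _ _
  obtain ⟨δ₁, hδ₁, hq⟩ := H ε₁ hε₁pos
  set η : ℝ := min (ε/(4*(L+2))) (1/2) with hηdef
  have hηpos : 0 < η := lt_min (by positivity) (by norm_num)
  have hηa : η ≤ ε/(4*(L+2)) := min_le_left _ _
  have hηb : η ≤ 1/2 := min_le_right _ _
  refine ⟨δ₁/2, by linarith, ?_⟩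
  intro t ht hdist
  rw [Real.dist_eq, sub_zero] at hdist
  have ht0 : 0 < t := ht
  have htabs : t < δ₁/2 := by rwa [abs_of_pos ht0] at hdist
  obtain ⟨q₂, hq₂1, hq₂2⟩ := exists_rat_btwn (show t < t*(1+η) by nlinarith)
  obtain ⟨q₁, hq₁1, hq₁2⟩ := exists_rat_btwn (show t*(1-η) < t by nlinarith)
  have hq₁pos : 0 < (q₁:ℝ) := lt_of_lt_of_le (by nlinarith) (le_of_lt hq₁1)
  have hq₂pos : 0 < (q₂:ℝ) := lt_trans ht0 hq₂1
  have hq₁δ : (q₁:ℝ) < δ₁ := by linarith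
  have hq₂δ : (q₂:ℝ) < δ₁ := by nlinarith
  have hs₁ := hq q₁ hq₁pos hq₁δ
  have hs₂ := hq q₂ hq₂pos hq₂δ
  rw [abs_le] at hs₁ hs₂
  -- increments
  have hinc₂ : φ (x+t) - φ x ≤ (L+ε₁)*((1+η)*t) := by
    have h1 : φ (x+t) - φ x ≤ φ (x+q₂) - φ x := by
      have := hφ (show x+t ≤ x+(q₂:ℝ) by linarith)
      linarith
    have h2 : φ (x+q₂) - φ x ≤ (L+ε₁)*q₂ := by
      have h := (div_le_iff₀ hq₂pos).1 (show (φ (x+q₂) - φ x)/q₂ ≤ L+ε₁ by linarith [hs₂.2])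
      linarith
    have h3 : (L+ε₁)*(q₂:ℝ) ≤ (L+ε₁)*(t*(1+η)) :=
      mul_le_mul_of_nonneg_left (le_of_lt hq₂2) (by linarith)
    calc φ (x+t) - φ x ≤ (L+ε₁)*q₂ := le_trans h1 h2
    _ ≤ (L+ε₁)*(t*(1+η)) := h3
    _ = (L+ε₁)*((1+η)*t) := by ring
  have hinc₁ : (L - ε₁ - η*L) * t ≤ φ (x+t) - φ x := by
    have h1 : φ (x+q₁) - φ x ≤ φ (x+t) - φ x := by
      have := hφ (show x+(q₁:ℝ) ≤ x+t by linarith)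
      linarith
    have h2 : (L-ε₁)*q₁ ≤ φ (x+q₁) - φ x := by
      have h := (le_div_iff₀ hq₁pos).1 (show L-ε₁ ≤ (φ (x+q₁) - φ x)/q₁ by linarith [hs₁.1])
      linarith
    rcases le_or_gt 0 (L - ε₁) with hc | hc
    · have h3 : (L-ε₁)*(t*(1-η)) ≤ (L-ε₁)*(q₁:ℝ) :=
        mul_le_mul_of_nonneg_left (le_of_lt hq₁1) hc
      have h4 : (0:ℝ) ≤ t*η*ε₁ := by positivity
      have h6 : (L - ε₁ - η*L)*t = (L-ε₁)*(t*(1-η)) - t*η*ε₁ := by ring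
      linarith [h1, h2, h3, h4, h6]
    · have h3 : φ (x+t) - φ x ≥ 0 := sub_nonneg.2 (hφ (by linarith))
      have h4 : (L-ε₁)*t ≤ 0 := mul_nonpos_of_nonpos_of_nonneg (le_of_lt hc) (le_of_lt ht0)
      have h5 : (0:ℝ) ≤ η*L*t := by positivity
      have h6 : (L - ε₁ - η*L)*t = (L-ε₁)*t - η*L*t := by ring
      linarith [h3, h4, h5, h6]
  have hup : (φ (x+t) - φ x)/t ≤ L + ε₁ + η*(L+ε₁) := by
    rw [div_le_iff₀ ht0]
    have h6 : (L + ε₁ + η*(L+ε₁))*t = (L+ε₁)*((1+η)*t) := by ring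
    linarith [hinc₂, h6]
  have hdown : L - ε₁ - η*L ≤ (φ (x+t) - φ x)/t := by
    rw [le_div_iff₀ ht0]; exact hinc₁
  have hηL : η*L ≤ ε/4 := by
    have h1 : η*(L+2) ≤ (ε/(4*(L+2)))*(L+2) :=
      mul_le_mul_of_nonneg_right hηa (by linarith)
    have h2 : (ε/(4*(L+2)))*(L+2) = ε/4 := by field_simp
    nlinarith [hηpos.le]
  have hηε : η*ε₁ ≤ ε/8 := by
    have h := mul_le_mul hηb hε₁a (le_of_lt hε₁pos) (by norm_num : (0:ℝ) ≤ 1/2)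
    linarith
  have hexp : η*(L+ε₁) = η*L + η*ε₁ := by ring
  rw [Real.dist_eq, abs_sub_lt_iff]
  constructor <;> linarith [hup, hdown, hηL, hηε, hε₁a, hexp]

lemma mono_rat_hasDerivAt {φ : ℝ → ℝ} (hφ : Monotone φ) (x L : ℝ)
    (H : ∀ ε > 0, ∃ δ > 0, ∀ q : ℚ, (q:ℝ) ≠ 0 → |(q:ℝ)| < δ → |(φ (x+q) - φ x)/q - L| ≤ ε) :
    HasDerivAt φ L x := by
  have Hr : ∀ ε > 0, ∃ δ > 0, ∀ q : ℚ, 0 < (q:ℝ) → (q:ℝ) < δ →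
      |(φ (x+q) - φ x)/q - L| ≤ ε := by
    intro ε hε
    obtain ⟨δ, hδ, hq⟩ := H ε hε
    exact ⟨δ, hδ, fun q h1 h2 => hq q (ne_of_gt h1) (by rwa [abs_of_pos h1])⟩
  set ψ : ℝ → ℝ := fun u => -φ (2*x - u) with hψdef
  have hψ : Monotone ψ := by
    intro a b hab
    simp only [hψdef, neg_le_neg_iff]
    exact hφ (by linarith)
  have Hψ : ∀ ε > 0, ∃ δ > 0, ∀ q : ℚ, 0 < (q:ℝ) → (q:ℝ) < δ →
      |(ψ (x+q) - ψ x)/q - L| ≤ ε := by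
    intro ε hε
    obtain ⟨δ, hδ, hq⟩ := H ε hε
    refine ⟨δ, hδ, fun q h1 h2 => ?_⟩
    have h3 := hq (-q) (by push_cast; simp [ne_of_gt h1]) (by push_cast; rwa [abs_neg, abs_of_pos h1])
    have e1 : (ψ (x+q) - ψ x)/q = (φ (x + (-q:ℚ)) - φ x)/((-q:ℚ):ℝ) := by
      push_cast
      have e2 : (2*x - (x+(q:ℝ))) = x + -(q:ℝ) := by ring
      simp only [hψdef, e2]
      have e3 : (2*x - x) = x := by ring
      rw [e3]
      rw [div_neg, ← neg_div]
      ring_nf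
    rwa [e1]
  have Tr := mono_right_slope hφ x L Hr
  have Tψ := mono_right_slope hψ x L Hψ
  rw [hasDerivAt_iff_tendsto_slope, ← nhdsLT_sup_nhdsGT x, tendsto_sup]
  constructor
  · -- left: y < x
    have hmap : Tendsto (fun y : ℝ => x - y) (𝓝[<] x) (𝓝[>] (0:ℝ)) := by
      rw [tendsto_nhdsWithin_iff]
      constructor
      · apply tendsto_nhdsWithin_of_tendsto_nhds
        have : Tendsto (fun y : ℝ => x - y) (𝓝 x) (𝓝 (x - x)) :=
          (continuous_const.sub continuous_id).tendsto x
        simpa using this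
      · filter_upwards [self_mem_nhdsWithin] with y hy
        exact sub_pos.2 (Set.mem_Iio.1 hy)
    have comp := Tψ.comp hmap
    refine comp.congr ?_
    intro y
    have e2 : 2*x - (x + (x - y)) = y := by ring
    have e3 : 2*x - x = x := by ring
    simp only [Function.comp, hψdef, e2, e3, slope_def_field]
    rw [show -φ y - -φ x = -(φ y - φ x) by ring, show x - y = -(y-x) by ring,
      neg_div_neg_eq]
  · -- right: y > x
    have hmap : Tendsto (fun y : ℝ => y - x) (𝓝[>] x) (𝓝[>] (0:ℝ)) := by
      rw [tendsto_nhdsWithin_iff]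
      constructor
      · apply tendsto_nhdsWithin_of_tendsto_nhds
        have : Tendsto (fun y : ℝ => y - x) (𝓝 x) (𝓝 (x - x)) :=
          (continuous_id.sub continuous_const).tendsto x
        simpa using this
      · filter_upwards [self_mem_nhdsWithin] with y hy
        exact sub_pos.2 (Set.mem_Ioi.1 hy)
    have comp := Tr.comp hmap
    refine comp.congr ?_
    intro y
    have e1 : x + (y - x) = y := by ring
    simp only [Function.comp, e1, slope_def_field]


lemma cauchy_rat_slope {s : ℚ → ℝ}
    (H : ∀ k : ℕ, ∃ m : ℕ, ∀ q q' : ℚ, (q:ℝ) ≠ 0 → (q':ℝ) ≠ 0 →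
      |(q:ℝ)| < 1/(m+1) → |(q':ℝ)| < 1/(m+1) → |s q - s q'| ≤ 1/(k+1)) :
    ∃ L, ∀ ε > 0, ∃ δ > 0, ∀ q : ℚ, (q:ℝ) ≠ 0 → |(q:ℝ)| < δ → |s q - L| ≤ ε := by
  choose m hm using H
  set Q : ℕ → ℚ := fun j => 1/(j+1) with hQ
  have hQne : ∀ j : ℕ, ((Q j : ℝ)) ≠ 0 := by
    intro j; rw [hQ]; push_cast; positivity
  have hQabs : ∀ j : ℕ, |(Q j : ℝ)| = 1/(j+1) := by
    intro j; rw [hQ]; push_cast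
    rw [abs_of_pos (by positivity)]
  have hQlt : ∀ j k : ℕ, k < j → |(Q j : ℝ)| < 1/(k+1) := by
    intro j k hkj
    rw [hQabs]
    apply one_div_lt_one_div_of_lt (by positivity)
    have : (k:ℝ) < j := by exact_mod_cast hkj
    linarith
  set b : ℕ → ℝ := fun j => s (Q j) with hb
  have hcauchy : CauchySeq b := by
    rw [Metric.cauchySeq_iff]
    intro ε hε
    obtain ⟨k, hk⟩ := exists_nat_one_div_lt hε
    refine ⟨m k + 1, fun j hj j' hj' => ?_⟩
    have h1 := hm k (Q j) (Q j') (hQne j) (hQne j') (hQlt j (m k) (by omega)) (hQlt j' (m k) (by omega))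
    rw [Real.dist_eq]
    calc |b j - b j'| ≤ 1/(k+1) := h1
    _ < ε := by exact_mod_cast hk
  obtain ⟨L, hL⟩ := cauchySeq_tendsto_of_complete hcauchy
  refine ⟨L, fun ε hε => ?_⟩
  obtain ⟨k, hk⟩ := exists_nat_one_div_lt hε
  refine ⟨1/(m k + 1), by positivity, fun q hq hqlt => ?_⟩
  have key : ∀ j : ℕ, m k < j → |s q - b j| ≤ 1/(k+1) := by
    intro j hj
    exact hm k q (Q j) hq (hQne j) hqlt (hQlt j (m k) hj)
  have htend : Tendsto (fun j => |s q - b j|) atTop (𝓝 |s q - L|) :=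
    ((tendsto_const_nhds.sub hL).abs)
  have hle : |s q - L| ≤ 1/(k+1) := by
    apply le_of_tendsto htend
    filter_upwards [eventually_gt_atTop (m k)] with j hj
    exact key j hj
  calc |s q - L| ≤ 1/(k+1) := hle
  _ ≤ ε := le_of_lt (by exact_mod_cast hk)

lemma hasDerivAt_cauchy {φ : ℝ → ℝ} {x d : ℝ} (h : HasDerivAt φ d x) :
    ∀ k : ℕ, ∃ m : ℕ, ∀ q q' : ℚ, (q:ℝ) ≠ 0 → (q':ℝ) ≠ 0 →
      |(q:ℝ)| < 1/(m+1) → |(q':ℝ)| < 1/(m+1) →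
      |(φ (x+q) - φ x)/q - (φ (x+q') - φ x)/q'| ≤ 1/(k+1) := by
  intro k
  have ht := hasDerivAt_iff_tendsto_slope.1 h
  rw [Metric.tendsto_nhdsWithin_nhds] at ht
  obtain ⟨δ, hδ, hd⟩ := ht (1/(2*(k+1))) (by positivity)
  obtain ⟨m, hm⟩ := exists_nat_one_div_lt hδ
  refine ⟨m, fun q q' hq hq' hql hq'l => ?_⟩
  have key : ∀ r : ℚ, (r:ℝ) ≠ 0 → |(r:ℝ)| < 1/(m+1) →
      |(φ (x+r) - φ x)/r - d| < 1/(2*(k+1)) := by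
    intro r hr hrl
    have h1 : x + (r:ℝ) ∈ ({x}ᶜ : Set ℝ) := by
      simp only [Set.mem_compl_iff, Set.mem_singleton_iff]
      intro hc
      exact hr (by linarith)
    have h2 : dist (x + (r:ℝ)) x < δ := by
      rw [Real.dist_eq]
      calc |x + (r:ℝ) - x| = |(r:ℝ)| := by ring_nf
      _ < 1/(m+1) := hrl
      _ < δ := hm
    have h3 := hd h1 h2
    rw [Real.dist_eq, slope_def_field] at h3
    have e1 : x + (r:ℝ) - x = (r:ℝ) := by ring
    rwa [e1] at h3
  have h1 := key q hq hql
  have h2 := key q' hq' hq'l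
  have hk0 : ((k:ℝ)+1) ≠ 0 := by positivity
  calc |(φ (x+q) - φ x)/q - (φ (x+q') - φ x)/q'|
      ≤ |(φ (x+q) - φ x)/q - d| + |d - (φ (x+q') - φ x)/q'| := abs_sub_le _ _ _
  _ = |(φ (x+q) - φ x)/q - d| + |(φ (x+q') - φ x)/q' - d| := by rw [abs_sub_comm d]
  _ ≤ 1/(2*(k+1)) + 1/(2*(k+1)) := by linarith
  _ = 1/(k+1) := by rw [← add_div]; rw [show (1:ℝ)+1 = 2 by norm_num, show (2:ℝ)/(2*((k:ℝ)+1)) = 1/((k:ℝ)+1) by field_simp]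


lemma hasDerivAt_fst' {G : ℝ × ℝ → ℝ} {a b : ℝ} (hG : DifferentiableAt ℝ G (a, b)) :
    HasDerivAt (fun l => G (l, b)) (fderiv ℝ G (a, b) (1, 0)) a := by
  have hc : HasDerivAt (fun l : ℝ => (l, b)) ((1:ℝ), (0:ℝ)) a :=
    (hasDerivAt_id a).prodMk (hasDerivAt_const a b)
  exact hG.hasFDerivAt.comp_hasDerivAt a hc

lemma hasDerivAt_snd' {G : ℝ × ℝ → ℝ} {a b : ℝ} (hG : DifferentiableAt ℝ G (a, b)) :
    HasDerivAt (fun h => G (a, h)) (fderiv ℝ G (a, b) (0, 1)) b := by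
  have hc : HasDerivAt (fun h : ℝ => (a, h)) ((0:ℝ), (1:ℝ)) b :=
    (hasDerivAt_const b a).prodMk (hasDerivAt_id b)
  exact hG.hasFDerivAt.comp_hasDerivAt b hc

lemma integral_deriv_zero {v : ℝ → ℝ} (hv : ContDiff ℝ 1 v) (hs : HasCompactSupport v) :
    ∫ x, deriv v x = 0 := by
  have h1 : ∫ x in Iic 0, deriv v x = v 0 := hs.integral_Iic_deriv_eq hv 0
  have h2 : ∫ x in Ioi 0, deriv v x = -v 0 := hs.integral_Ioi_deriv_eq hv 0
  have hint : Integrable (deriv v) := by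
    exact ((hv.continuous_deriv le_rfl).integrable_of_hasCompactSupport hs.deriv)
  rw [← intervalIntegral.integral_Iic_add_Ioi (b := (0:ℝ)) hint.integrableOn hint.integrableOn, h1, h2]
  ring

lemma isClosedEmbedding_mk_left (x : ℝ) : Topology.IsClosedEmbedding (fun y : ℝ => (x, y)) := by
  have hiso : Isometry (fun y : ℝ => (x, y)) := by
    intro y z
    rw [Prod.edist_eq]
    simp
  exact hiso.isClosedEmbedding

lemma isClosedEmbedding_mk_right (y : ℝ) : Topology.IsClosedEmbedding (fun x : ℝ => (x, y)) := by
  have hiso : Isometry (fun x : ℝ => (x, y)) := by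
    intro a b
    rw [Prod.edist_eq]
    simp
  exact hiso.isClosedEmbedding

/-- integral of second partial derivative of a C¹ compactly supported function is 0 -/
lemma integral_Dsnd_zero {u : ℝ × ℝ → ℝ} (hu : ContDiff ℝ 1 u) (hs : HasCompactSupport u) :
    ∫ p : ℝ × ℝ, fderiv ℝ u p (0, 1) = 0 := by
  have hud : Differentiable ℝ u := hu.differentiable one_ne_zero
  have hcont : Continuous fun p => fderiv ℝ u p (0, 1) :=
    (hu.continuous_fderiv one_ne_zero).clm_apply continuous_const
  have hcs : HasCompactSupport fun p => fderiv ℝ u p (0, 1) := hs.fderiv_apply _ _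
  have hint : Integrable (fun p : ℝ × ℝ => fderiv ℝ u p (0, 1)) volume :=
    hcont.integrable_of_hasCompactSupport hcs
  rw [MeasureTheory.Measure.volume_eq_prod] at hint ⊢
  rw [MeasureTheory.integral_prod _ hint]
  have inner : ∀ x : ℝ, ∫ y : ℝ, fderiv ℝ u (x, y) (0, 1) = 0 := by
    intro x
    have hvc : ContDiff ℝ 1 (fun y => u (x, y)) :=
      hu.comp ((contDiff_const (c := x)).prodMk contDiff_id)
    have hvs : HasCompactSupport (fun y => u (x, y)) :=
      hs.comp_isClosedEmbedding (isClosedEmbedding_mk_left x)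
    have hd : ∀ y : ℝ, deriv (fun y' => u (x, y')) y = fderiv ℝ u (x, y) (0, 1) :=
      fun y => (hasDerivAt_snd' (hud (x, y))).deriv
    have e : ∫ y : ℝ, fderiv ℝ u (x,y) (0,1) = ∫ y : ℝ, deriv (fun y' => u (x,y')) y :=
      integral_congr_ae (Eventually.of_forall fun y => (hd y).symm)
    rw [e]
    exact integral_deriv_zero hvc hvs
  calc ∫ (x:ℝ), ∫ (y:ℝ), fderiv ℝ u (x,y) (0,1) = ∫ (_:ℝ), (0:ℝ) := by
        apply integral_congr_ae (Eventually.of_forall fun x => inner x)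
  _ = 0 := integral_zero _ _

lemma integral_Dfst_zero {u : ℝ × ℝ → ℝ} (hu : ContDiff ℝ 1 u) (hs : HasCompactSupport u) :
    ∫ p : ℝ × ℝ, fderiv ℝ u p (1, 0) = 0 := by
  have hud : Differentiable ℝ u := hu.differentiable one_ne_zero
  have hcont : Continuous fun p => fderiv ℝ u p (1, 0) :=
    (hu.continuous_fderiv one_ne_zero).clm_apply continuous_const
  have hint : Integrable (fun p : ℝ × ℝ => fderiv ℝ u p (1, 0)) volume :=
    hcont.integrable_of_hasCompactSupport (hs.fderiv_apply _ _)
  rw [MeasureTheory.Measure.volume_eq_prod] at hint ⊢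
  rw [MeasureTheory.integral_prod_symm _ hint]
  have inner : ∀ y : ℝ, ∫ x : ℝ, fderiv ℝ u (x, y) (1, 0) = 0 := by
    intro y
    have hvc : ContDiff ℝ 1 (fun x => u (x, y)) :=
      hu.comp (contDiff_id.prodMk (contDiff_const (c := y)))
    have hvs : HasCompactSupport (fun x => u (x, y)) :=
      hs.comp_isClosedEmbedding (isClosedEmbedding_mk_right y)
    have hd : ∀ x : ℝ, deriv (fun x' => u (x', y)) x = fderiv ℝ u (x, y) (1, 0) :=
      fun x => (hasDerivAt_fst' (hud (x, y))).deriv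
    have e : ∫ x : ℝ, fderiv ℝ u (x,y) (1,0) = ∫ x : ℝ, deriv (fun x' => u (x',y)) x :=
      integral_congr_ae (Eventually.of_forall fun x => (hd x).symm)
    rw [e]
    exact integral_deriv_zero hvc hvs
  calc ∫ (y:ℝ), ∫ (x:ℝ), fderiv ℝ u (x,y) (1,0) = ∫ (_:ℝ), (0:ℝ) := by
        apply integral_congr_ae (Eventually.of_forall fun y => inner y)
  _ = 0 := integral_zero _ _

lemma ibp_gen {G φ : ℝ × ℝ → ℝ} (v : ℝ × ℝ) (hG : ContDiff ℝ 1 G) (hφ : ContDiff ℝ 1 φ)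
    (hsφ : HasCompactSupport φ)
    (hzero : ∫ p : ℝ × ℝ, fderiv ℝ (fun p => G p * φ p) p v = 0) :
    ∫ p : ℝ × ℝ, G p * fderiv ℝ φ p v = -∫ p : ℝ × ℝ, φ p * fderiv ℝ G p v := by
  have hGd : Differentiable ℝ G := hG.differentiable one_ne_zero
  have hφd : Differentiable ℝ φ := hφ.differentiable one_ne_zero
  have hsplit : ∀ p : ℝ × ℝ, fderiv ℝ (fun p => G p * φ p) p v
      = G p * fderiv ℝ φ p v + φ p * fderiv ℝ G p v := by
    intro p
    rw [fderiv_fun_mul (hGd p) (hφd p)]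
    simp [smul_eq_mul]
  have intA : Integrable (fun p : ℝ × ℝ => G p * fderiv ℝ φ p v) volume := by
    apply Continuous.integrable_of_hasCompactSupport
    · exact hG.continuous.mul ((hφ.continuous_fderiv one_ne_zero).clm_apply continuous_const)
    · exact HasCompactSupport.mul_left (hsφ.fderiv_apply _ _)
  have intB : Integrable (fun p : ℝ × ℝ => φ p * fderiv ℝ G p v) volume := by
    apply Continuous.integrable_of_hasCompactSupport
    · exact hφ.continuous.mul ((hG.continuous_fderiv one_ne_zero).clm_apply continuous_const)
    · exact HasCompactSupport.mul_right hsφ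
  have h1 : ∫ p : ℝ × ℝ, fderiv ℝ (fun p => G p * φ p) p v
      = (∫ p : ℝ × ℝ, G p * fderiv ℝ φ p v) + ∫ p : ℝ × ℝ, φ p * fderiv ℝ G p v := by
    rw [← integral_add intA intB]
    exact integral_congr_ae (Eventually.of_forall fun p => hsplit p)
  rw [h1] at hzero
  linarith

lemma ibp_fst {G φ : ℝ × ℝ → ℝ} (hG : ContDiff ℝ 1 G) (hφ : ContDiff ℝ 1 φ)
    (hsφ : HasCompactSupport φ) :
    ∫ p : ℝ × ℝ, G p * fderiv ℝ φ p (1, 0) = -∫ p : ℝ × ℝ, φ p * fderiv ℝ G p (1, 0) := by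
  apply ibp_gen _ hG hφ hsφ
  apply integral_Dfst_zero (hG.mul hφ)
  exact HasCompactSupport.mul_left hsφ

lemma ibp_snd {G φ : ℝ × ℝ → ℝ} (hG : ContDiff ℝ 1 G) (hφ : ContDiff ℝ 1 φ)
    (hsφ : HasCompactSupport φ) :
    ∫ p : ℝ × ℝ, G p * fderiv ℝ φ p (0, 1) = -∫ p : ℝ × ℝ, φ p * fderiv ℝ G p (0, 1) := by
  apply ibp_gen _ hG hφ hsφ
  apply integral_Dsnd_zero (hG.mul hφ)
  exact HasCompactSupport.mul_left hsφ

lemma measurableSet_Cd {F : ℝ × ℝ → ℝ} (hF : Measurable F) :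
    MeasurableSet {p : ℝ × ℝ | Cd (fun x => F (x, p.2)) p.1} := by
  have hsl : ∀ q : ℚ, Measurable (fun p : ℝ × ℝ => (F (p.1 + q, p.2) - F p)/(q:ℝ)) := by
    intro q
    apply Measurable.div_const
    exact (hF.comp ((measurable_fst.add_const _).prodMk measurable_snd)).sub hF
  have e : {p : ℝ × ℝ | Cd (fun x => F (x, p.2)) p.1} =
      ⋂ k : ℕ, ⋃ m : ℕ, ⋂ q : ℚ, ⋂ q' : ℚ,
        {p : ℝ × ℝ | (q:ℝ) ≠ 0 → (q':ℝ) ≠ 0 → |(q:ℝ)| < 1/(m+1) → |(q':ℝ)| < 1/(m+1) →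
          |(F (p.1 + q, p.2) - F p)/(q:ℝ) - (F (p.1 + q', p.2) - F p)/(q':ℝ)| ≤ 1/(k+1)} := by
    ext p
    simp only [Cd, Set.mem_setOf_eq, Set.mem_iInter, Set.mem_iUnion]
  rw [e]
  refine MeasurableSet.iInter fun k => MeasurableSet.iUnion fun m =>
    MeasurableSet.iInter fun q => MeasurableSet.iInter fun q' => ?_
  by_cases h1 : (q:ℝ) ≠ 0
  · by_cases h2 : (q':ℝ) ≠ 0
    · by_cases h3 : |(q:ℝ)| < 1/(m+1)
      · by_cases h4 : |(q':ℝ)| < 1/(m+1)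
        · have e2 : {p : ℝ × ℝ | (q:ℝ) ≠ 0 → (q':ℝ) ≠ 0 → |(q:ℝ)| < 1/(m+1) → |(q':ℝ)| < 1/(m+1) →
              |(F (p.1 + q, p.2) - F p)/(q:ℝ) - (F (p.1 + q', p.2) - F p)/(q':ℝ)| ≤ 1/(k+1)}
              = {p : ℝ × ℝ |
              |(F (p.1 + q, p.2) - F p)/(q:ℝ) - (F (p.1 + q', p.2) - F p)/(q':ℝ)| ≤ 1/(k+1)} := by
            ext p
            exact ⟨fun hp => hp h1 h2 h3 h4, fun hp _ _ _ _ => hp⟩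
          rw [e2]
          exact measurableSet_le (((hsl q).sub (hsl q')).abs) measurable_const
        · simp only [h4]; simp
      · simp only [h3]; simp
    · simp only [h2]; simp
  · simp only [h1]; simp

lemma ae_of_ae_swap {p : ℝ × ℝ → Prop} (hp : MeasurableSet {z : ℝ × ℝ | p z})
    (h : ∀ᵐ y : ℝ, ∀ᵐ x : ℝ, p (x, y)) : ∀ᵐ z : ℝ × ℝ ∂volume, p z := by
  rw [MeasureTheory.Measure.volume_eq_prod, ← Measure.prod_swap]
  rw [ae_map_iff measurable_swap.aemeasurable hp]
  have hps : MeasurableSet {w : ℝ × ℝ | p w.swap} := measurable_swap hp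
  exact (Measure.ae_prod_iff_ae_ae hps).2 h

lemma key_comparison (fn : ℕ → ℝ → ℝ → ℝ) (f : ℝ → ℝ → ℝ) (g : ℝ → ℝ → ℝ)
    (hmono : ∀ n, (∀ h, Monotone fun l => fn n l h) ∧ (∀ l, Monotone fun h => fn n l h))
    (hC1 : ∀ n, ContDiff ℝ 1 (fun p : ℝ × ℝ => fn n p.1 p.2))
    (hPDIn : ∀ n l h, deriv (fun l' => fn n l' h) l ≤ g l h * deriv (fun h' => fn n l h') h)
    (hlim : ∀ l h, Tendsto (fun n => fn n l h) atTop (nhds (f l h)))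
    (l h M a : ℝ) (ha : 0 < a)
    (hbound : ∀ t ∈ Icc (0:ℝ) a, g (l+t) (h + M*(a-t)) ≤ M) :
    f (l+a) h ≤ f l (h + M*a) := by
  have key : ∀ n, fn n (l+a) h ≤ fn n l (h + M*a) := by
    intro n
    set G : ℝ × ℝ → ℝ := fun p => fn n p.1 p.2 with hGdef
    have hGd : Differentiable ℝ G := (hC1 n).differentiable one_ne_zero
    set F : ℝ → ℝ := fun t => fn n (l+t) (h + M*(a-t)) with hFdef
    have hF : ∀ t : ℝ, HasDerivAt F
        (fderiv ℝ G (l+t, h + M*(a-t)) (1,0) + (M * -1) * fderiv ℝ G (l+t, h + M*(a-t)) (0,1)) t := by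
      intro t
      have hc2 : HasDerivAt (fun t : ℝ => h + M*(a-t)) (M * -1) t :=
        (((hasDerivAt_id t).const_sub a).const_mul M).const_add h
      have hc1 : HasDerivAt (fun t : ℝ => l + t) 1 t := (hasDerivAt_id t).const_add l
      have hc : HasDerivAt (fun t : ℝ => ((l+t : ℝ), (h + M*(a-t) : ℝ))) ((1:ℝ), M * -1) t :=
        hc1.prodMk hc2
      have hcomp := (hGd ((l+t, h + M*(a-t)))).hasFDerivAt.comp_hasDerivAt t hc
      have ev : ((1:ℝ), M * -1) = ((1:ℝ),(0:ℝ)) + (M * -1) • ((0:ℝ),(1:ℝ)) := by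
        simp [Prod.ext_iff]
      rw [ev, map_add, _root_.map_smul] at hcomp
      simp [smul_eq_mul] at hcomp ⊢
      exact hcomp
    have hder : ∀ t ∈ Ioo (0:ℝ) a,
        fderiv ℝ G (l+t, h + M*(a-t)) (1,0) + (M * -1) * fderiv ℝ G (l+t, h + M*(a-t)) (0,1) ≤ 0 := by
      intro t ht
      set z1 := l + t
      set z2 := h + M*(a-t)
      have hDl : fderiv ℝ G (z1, z2) (1,0) = deriv (fun l' => fn n l' z2) z1 :=
        ((hasDerivAt_fst' (hGd (z1, z2))).deriv).symm
      have hDh : fderiv ℝ G (z1, z2) (0,1) = deriv (fun h' => fn n z1 h') z2 :=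
        ((hasDerivAt_snd' (hGd (z1, z2))).deriv).symm
      have hDh0 : 0 ≤ fderiv ℝ G (z1, z2) (0,1) := by
        exact mono_hasDerivAt_nonneg ((hmono n).2 z1) (hasDerivAt_snd' (hGd (z1, z2)))
      have hineq : fderiv ℝ G (z1, z2) (1,0) ≤ g z1 z2 * fderiv ℝ G (z1, z2) (0,1) := by
        rw [hDl, hDh]; exact hPDIn n z1 z2
      have hgM : g z1 z2 ≤ M := hbound t ⟨le_of_lt ht.1, le_of_lt ht.2⟩
      nlinarith [mul_le_mul_of_nonneg_right hgM hDh0]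
    have hant : AntitoneOn F (Icc (0:ℝ) a) := by
      apply antitoneOn_of_deriv_nonpos (convex_Icc 0 a)
      · apply Continuous.continuousOn
        have : Continuous (fun t : ℝ => ((l+t : ℝ), (h + M*(a-t) : ℝ))) := by continuity
        exact (hC1 n).continuous.comp this
      · intro t ht
        rw [interior_Icc] at ht
        exact (hF t).differentiableAt.differentiableWithinAt
      · intro t ht
        rw [interior_Icc] at ht
        rw [(hF t).deriv]
        exact hder t ht
    have h1 := hant (Set.left_mem_Icc.2 ha.le) (Set.right_mem_Icc.2 ha.le) ha.le
    simpa [hFdef] using h1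
  exact le_of_tendsto_of_tendsto' (hlim (l+a) h) (hlim l (h + M*a)) key

/-- Weak-limit argument for passing the differential inequality
`∂f/∂λ ≤ g ∂f/∂h` to a pointwise limit of monotone functions: if `fₙ : [0,∞)² → [0,1]`
are nondecreasing in each variable, `C¹`, satisfy the inequality pointwise, and
converge pointwise to `f`, then `f` is nondecreasing in each variable, its partial
derivatives exist a.e., the inequality holds a.e. where both partial derivatives
exist, and it holds in the distributional (integration-by-parts) sense against
nonnegative smooth test functions supported in `(0,∞)²`. -/
theorem stmt14 (fn : ℕ → ℝ → ℝ → ℝ) (f : ℝ → ℝ → ℝ) (g : ℝ → ℝ → ℝ)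
    (hgc : ContDiff ℝ (⊤ : ℕ∞) (fun p : ℝ × ℝ => g p.1 p.2)) (hg0 : ∀ l h, 0 ≤ g l h)
    (hrange : ∀ n l h, 0 ≤ l → 0 ≤ h → fn n l h ∈ Set.Icc (0:ℝ) 1)
    (hmono : ∀ n, (∀ h, Monotone fun l => fn n l h) ∧ (∀ l, Monotone fun h => fn n l h))
    (hC1 : ∀ n, ContDiff ℝ 1 (fun p : ℝ × ℝ => fn n p.1 p.2))
    (hPDIn : ∀ n l h, deriv (fun l' => fn n l' h) l ≤ g l h * deriv (fun h' => fn n l h') h)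
    (hlim : ∀ l h, Tendsto (fun n => fn n l h) atTop (nhds (f l h))) :
    ((∀ h, Monotone fun l => f l h) ∧ (∀ l, Monotone fun h => f l h)) ∧
    (∀ᵐ p : ℝ × ℝ ∂(volume : Measure (ℝ × ℝ)),
      ∃ dl dh : ℝ,
        HasDerivAt (fun l => f l p.2) dl p.1 ∧ HasDerivAt (fun h => f p.1 h) dh p.2) ∧
    (∀ᵐ p : ℝ × ℝ ∂(volume : Measure (ℝ × ℝ)),
      ∀ dl dh : ℝ,
        HasDerivAt (fun l => f l p.2) dl p.1 → HasDerivAt (fun h => f p.1 h) dh p.2 →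
          dl ≤ g p.1 p.2 * dh) ∧
    (∀ φ : ℝ × ℝ → ℝ, ContDiff ℝ (⊤ : ℕ∞) φ → HasCompactSupport φ → (∀ p, 0 ≤ φ p) →
      Function.support φ ⊆ Set.Ioi 0 ×ˢ Set.Ioi 0 →
      -(∫ p : ℝ × ℝ, f p.1 p.2 * deriv (fun l => φ (l, p.2)) p.1) ≤
        -(∫ p : ℝ × ℝ, f p.1 p.2 * deriv (fun h => g p.1 h * φ (p.1, h)) p.2)) := by
  -- Part 1: monotonicity of the limit
  have hfmono : (∀ h, Monotone fun l => f l h) ∧ (∀ l, Monotone fun h => f l h) := by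
    constructor
    · intro h l l' hll'
      exact le_of_tendsto_of_tendsto' (hlim l h) (hlim l' h) (fun n => (hmono n).1 h hll')
    · intro l h h' hhh'
      exact le_of_tendsto_of_tendsto' (hlim l h) (hlim l h') (fun n => (hmono n).2 l hhh')
  have fmeas : Measurable (fun p : ℝ × ℝ => f p.1 p.2) := by
    apply measurable_of_tendsto_metrizable (fun n => ((hC1 n).continuous).measurable)
    rw [tendsto_pi_nhds]
    intro p
    exact hlim p.1 p.2
  refine ⟨hfmono, ?_, ?_, ?_⟩
  · -- Part 2: a.e. existence of both partial derivatives
    have hCdL : ∀ᵐ p : ℝ × ℝ ∂(volume : Measure (ℝ × ℝ)),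
        Cd (fun x => f x p.2) p.1 := by
      apply ae_of_ae_swap (measurableSet_Cd fmeas)
      apply ae_of_all
      intro y
      filter_upwards [(hfmono.1 y).ae_differentiableAt] with x hx
      exact fun k => hasDerivAt_cauchy hx.hasDerivAt k
    have hCdH : ∀ᵐ p : ℝ × ℝ ∂(volume : Measure (ℝ × ℝ)),
        Cd (fun y => f p.1 y) p.2 := by
      rw [MeasureTheory.Measure.volume_eq_prod]
      have hms : MeasurableSet {p : ℝ × ℝ | Cd (fun y => f p.1 y) p.2} :=
        measurable_swap (measurableSet_Cd (fmeas.comp measurable_swap))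
      apply (Measure.ae_prod_iff_ae_ae hms).2
      apply ae_of_all
      intro x
      filter_upwards [(hfmono.2 x).ae_differentiableAt] with y hy
      exact fun k => hasDerivAt_cauchy hy.hasDerivAt k
    filter_upwards [hCdL, hCdH] with p h1 h2
    obtain ⟨L1, hL1⟩ := cauchy_rat_slope h1
    obtain ⟨L2, hL2⟩ := cauchy_rat_slope h2
    exact ⟨L1, L2, mono_rat_hasDerivAt (hfmono.1 p.2) p.1 L1 hL1,
      mono_rat_hasDerivAt (hfmono.2 p.1) p.2 L2 hL2⟩
  · -- Part 3: the PDI at points of differentiability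
    apply ae_of_all
    rintro ⟨l, h⟩ dl dh hdl hdh
    have hdl' : HasDerivAt (fun l' => f l' h) dl l := hdl
    have hdh' : HasDerivAt (fun h' => f l h') dh h := hdh
    clear hdl hdh
    show dl ≤ g l h * dh
    have hdh0 : 0 ≤ dh := mono_hasDerivAt_nonneg (hfmono.2 l) hdh'
    have hM : ∀ ε > 0, dl ≤ (g l h + ε) * dh := by
      intro ε hε
      set M : ℝ := g l h + ε with hMdef
      have hM0 : 0 < M := by have := hg0 l h; simp only [hMdef]; linarith
      have hgcont : Continuous fun p : ℝ × ℝ => g p.1 p.2 := hgc.continuous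
      have hopen : {z : ℝ × ℝ | g z.1 z.2 < M} ∈ 𝓝 ((l, h) : ℝ × ℝ) := by
        apply (isOpen_lt hgcont continuous_const).mem_nhds
        simp only [Set.mem_setOf_eq, hMdef]
        linarith
      obtain ⟨r, hr, hball⟩ := Metric.mem_nhds_iff.1 hopen
      set a₀ : ℝ := r/(1+M) with ha₀def
      have ha₀ : 0 < a₀ := by positivity
      have hcomp : ∀ a ∈ Ioo (0:ℝ) a₀,
          (f (l+a) h - f l h)/a ≤ (f l (h+M*a) - f l h)/a := by
        intro a ha
        have hkey : f (l+a) h ≤ f l (h + M*a) := by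
          apply key_comparison fn f g hmono hC1 hPDIn hlim l h M a ha.1
          intro t ht
          have hz : ((l+t, h + M*(a-t)) : ℝ × ℝ) ∈ Metric.ball ((l,h) : ℝ × ℝ) r := by
            rw [Metric.mem_ball, Prod.dist_eq]
            apply max_lt
            · rw [Real.dist_eq]
              have : |l + t - l| = |t| := by ring_nf
              rw [this, abs_of_nonneg ht.1]
              calc t ≤ a := ht.2
              _ < a₀ := ha.2
              _ ≤ r := by rw [ha₀def]; rw [div_le_iff₀ (by linarith)]; nlinarith
            · rw [Real.dist_eq]
              have e1 : |h + M*(a-t) - h| = |M*(a-t)| := by ring_nf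
              rw [e1, abs_of_nonneg (by nlinarith [ht.2, hM0.le] : (0:ℝ) ≤ M*(a-t))]
              calc M*(a-t) ≤ M*a := by nlinarith [ht.1]
              _ < M*a₀ := by nlinarith [ha.2]
              _ ≤ r := by
                rw [ha₀def, ← mul_div_assoc, div_le_iff₀ (by linarith : (0:ℝ) < 1+M)]
                nlinarith
          exact le_of_lt (hball hz)
        have ha' : (0:ℝ) < a := ha.1
        exact (div_le_div_iff_of_pos_right ha').2 (by linarith)
      have hT1 : Tendsto (fun a => (f (l+a) h - f l h)/a) (𝓝[>] (0:ℝ)) (𝓝 dl) := by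
        have hsl := hasDerivAt_iff_tendsto_slope.1 hdl'
        have hmap : Tendsto (fun a : ℝ => l + a) (𝓝[>] (0:ℝ)) (𝓝[≠] l) := by
          rw [tendsto_nhdsWithin_iff]
          constructor
          · apply tendsto_nhdsWithin_of_tendsto_nhds
            have : Tendsto (fun a : ℝ => l + a) (𝓝 0) (𝓝 (l + 0)) :=
              (continuous_const.add continuous_id).tendsto 0
            simpa using this
          · filter_upwards [self_mem_nhdsWithin] with a ha
            simp only [Set.mem_compl_iff, Set.mem_singleton_iff]
            have : (0:ℝ) < a := ha
            intro hcon
            linarith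
        refine (hsl.comp hmap).congr ?_
        intro a
        simp only [Function.comp, slope_def_field]
        rw [show l + a - l = a by ring]
      have hT2 : Tendsto (fun a => (f l (h+M*a) - f l h)/a) (𝓝[>] (0:ℝ)) (𝓝 (M*dh)) := by
        have hsl := hasDerivAt_iff_tendsto_slope.1 hdh'
        have hmap : Tendsto (fun a : ℝ => h + M*a) (𝓝[>] (0:ℝ)) (𝓝[≠] h) := by
          rw [tendsto_nhdsWithin_iff]
          constructor
          · apply tendsto_nhdsWithin_of_tendsto_nhds
            have : Tendsto (fun a : ℝ => h + M*a) (𝓝 0) (𝓝 (h + M*0)) :=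
              (continuous_const.add (continuous_const.mul continuous_id)).tendsto 0
            simpa using this
          · filter_upwards [self_mem_nhdsWithin] with a ha
            simp only [Set.mem_compl_iff, Set.mem_singleton_iff]
            have ha' : (0:ℝ) < a := ha
            intro hcon
            nlinarith [mul_pos hM0 ha']
        have hcm := (tendsto_const_nhds (x := M)).mul (hsl.comp hmap)
        refine Tendsto.congr' ?_ hcm
        filter_upwards [self_mem_nhdsWithin] with a ha
        have ha' : (0:ℝ) < a := ha
        simp only [Function.comp, slope_def_field]
        have e1 : h + M*a - h = M*a := by ring
        rw [e1, ← mul_div_assoc, mul_div_mul_left _ _ (ne_of_gt hM0)]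
      have hev : (fun a => (f (l+a) h - f l h)/a) ≤ᶠ[𝓝[>] (0:ℝ)]
          (fun a => (f l (h+M*a) - f l h)/a) := by
        filter_upwards [Ioo_mem_nhdsGT_of_mem (Set.mem_Ico.2 ⟨le_rfl, ha₀⟩)] with a ha
        exact hcomp a ha
      exact le_of_tendsto_of_tendsto hT1 hT2 hev
    have hfinal : ∀ ε' > 0, dl ≤ g l h * dh + ε' := by
      intro ε' hε'
      have h1 := hM (ε'/(dh+1)) (by positivity)
      have h2 : (ε'/(dh+1)) * dh ≤ ε' := by
        rw [div_mul_eq_mul_div, div_le_iff₀ (by linarith)]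
        nlinarith
      nlinarith [h1, h2]
    exact le_of_forall_pos_le_add hfinal
  · -- Part 4: distributional inequality
    intro φ hφc hφs hφ0 hφsup
    have hφc1 : ContDiff ℝ 1 φ := hφc.of_le (by simp)
    have hφd : Differentiable ℝ φ := hφc1.differentiable one_ne_zero
    set w : ℝ × ℝ → ℝ := fun p => g p.1 p.2 * φ p with hw
    have hwc : ContDiff ℝ 1 w := (hgc.of_le (by simp)).mul hφc1
    have hws : HasCompactSupport w := hφs.mul_left
    have hwd : Differentiable ℝ w := hwc.differentiable one_ne_zero
    set Dφ : ℝ × ℝ → ℝ := fun p => fderiv ℝ φ p (1,0) with hDφ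
    set Dw : ℝ × ℝ → ℝ := fun p => fderiv ℝ w p (0,1) with hDw
    have hDφc : Continuous Dφ := (hφc1.continuous_fderiv one_ne_zero).clm_apply continuous_const
    have hDwc : Continuous Dw := (hwc.continuous_fderiv one_ne_zero).clm_apply continuous_const
    -- identify the deriv's in the statement with Dφ, Dw
    have eL : (fun p : ℝ × ℝ => f p.1 p.2 * deriv (fun l => φ (l, p.2)) p.1)
        = fun p : ℝ × ℝ => f p.1 p.2 * Dφ p := by
      funext p
      congr 1
      exact (hasDerivAt_fst' (hφd (p.1, p.2))).deriv
    have eR : (fun p : ℝ × ℝ => f p.1 p.2 * deriv (fun h => g p.1 h * φ (p.1, h)) p.2)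
        = fun p : ℝ × ℝ => f p.1 p.2 * Dw p := by
      funext p
      congr 1
      exact (hasDerivAt_snd' (hwd (p.1, p.2))).deriv
    rw [eL, eR]
    -- support facts
    have htsub : tsupport φ ⊆ Set.Ici (0:ℝ) ×ˢ Set.Ici (0:ℝ) := by
      have h1 : tsupport φ ⊆ closure (Set.Ioi (0:ℝ) ×ˢ Set.Ioi (0:ℝ)) := closure_mono hφsup
      rwa [closure_prod_eq, closure_Ioi] at h1
    have hDφ0 : ∀ p : ℝ × ℝ, p ∉ tsupport φ → Dφ p = 0 := by
      intro p hp
      have hev : φ =ᶠ[𝓝 p] 0 := notMem_tsupport_iff_eventuallyEq.1 hp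
      have : fderiv ℝ φ p = fderiv ℝ (fun _ : ℝ × ℝ => (0:ℝ)) p := hev.fderiv_eq
      simp only [hDφ, this, fderiv_const]
      simp
    have hwsub : tsupport w ⊆ tsupport φ :=
      closure_mono (Function.support_mul_subset_right _ _)
    have hDw0 : ∀ p : ℝ × ℝ, p ∉ tsupport φ → Dw p = 0 := by
      intro p hp
      have hev : w =ᶠ[𝓝 p] 0 := notMem_tsupport_iff_eventuallyEq.1 fun hc => hp (hwsub hc)
      have : fderiv ℝ w p = fderiv ℝ (fun _ : ℝ × ℝ => (0:ℝ)) p := hev.fderiv_eq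
      simp only [hDw, this, fderiv_const]
      simp
    have habs : ∀ n (p : ℝ × ℝ), p ∈ tsupport φ → |fn n p.1 p.2| ≤ 1 := by
      intro n p hp
      obtain ⟨h1, h2⟩ := htsub hp
      obtain ⟨h3, h4⟩ := hrange n p.1 p.2 h1 h2
      rw [abs_le]
      exact ⟨by linarith, h4⟩
    -- per-n inequality
    have keyn : ∀ n, -(∫ p : ℝ × ℝ, fn n p.1 p.2 * Dφ p) ≤
        -(∫ p : ℝ × ℝ, fn n p.1 p.2 * Dw p) := by
      intro n
      set G : ℝ × ℝ → ℝ := fun p => fn n p.1 p.2 with hG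
      have hGc : ContDiff ℝ 1 G := hC1 n
      have hGd : Differentiable ℝ G := hGc.differentiable one_ne_zero
      have h1 : ∫ p : ℝ × ℝ, G p * fderiv ℝ φ p (1,0)
          = -∫ p : ℝ × ℝ, φ p * fderiv ℝ G p (1,0) := ibp_fst hGc hφc1 hφs
      have h2 : ∫ p : ℝ × ℝ, G p * fderiv ℝ w p (0,1)
          = -∫ p : ℝ × ℝ, w p * fderiv ℝ G p (0,1) := ibp_snd hGc hwc hws
      have int1 : Integrable (fun p : ℝ × ℝ => φ p * fderiv ℝ G p (1,0)) volume := by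
        apply Continuous.integrable_of_hasCompactSupport
        · exact hφc1.continuous.mul ((hGc.continuous_fderiv one_ne_zero).clm_apply continuous_const)
        · exact hφs.mul_right
      have int2 : Integrable (fun p : ℝ × ℝ => w p * fderiv ℝ G p (0,1)) volume := by
        apply Continuous.integrable_of_hasCompactSupport
        · exact hwc.continuous.mul ((hGc.continuous_fderiv one_ne_zero).clm_apply continuous_const)
        · exact hws.mul_right
      have h3 : ∫ p : ℝ × ℝ, φ p * fderiv ℝ G p (1,0)
          ≤ ∫ p : ℝ × ℝ, w p * fderiv ℝ G p (0,1) := by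
        apply integral_mono int1 int2
        intro p
        have e1 : fderiv ℝ G p (1,0) = deriv (fun l' => fn n l' p.2) p.1 :=
          ((hasDerivAt_fst' (hGd (p.1, p.2))).deriv).symm
        have e2 : fderiv ℝ G p (0,1) = deriv (fun h' => fn n p.1 h') p.2 :=
          ((hasDerivAt_snd' (hGd (p.1, p.2))).deriv).symm
        have hineq := hPDIn n p.1 p.2
        have hφp := hφ0 p
        have := mul_le_mul_of_nonneg_left (e1 ▸ e2 ▸ hineq) hφp
        calc φ p * fderiv ℝ G p (1,0) ≤ φ p * (g p.1 p.2 * fderiv ℝ G p (0,1)) := this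
        _ = w p * fderiv ℝ G p (0,1) := by rw [hw]; ring
      linarith [h1, h2, h3]
    -- dominated convergence
    have hbnd1 : Integrable (fun p : ℝ × ℝ => |Dφ p|) volume := by
      apply Continuous.integrable_of_hasCompactSupport hDφc.abs
      exact (hφs.fderiv_apply _ _).abs
    have hbnd2 : Integrable (fun p : ℝ × ℝ => |Dw p|) volume := by
      apply Continuous.integrable_of_hasCompactSupport hDwc.abs
      exact (hws.fderiv_apply _ _).abs
    have hA : Tendsto (fun n => ∫ p : ℝ × ℝ, fn n p.1 p.2 * Dφ p) atTop
        (𝓝 (∫ p : ℝ × ℝ, f p.1 p.2 * Dφ p)) := by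
      apply tendsto_integral_of_dominated_convergence _ _ hbnd1
      · intro n
        apply ae_of_all
        intro p
        by_cases hp : p ∈ tsupport φ
        · rw [Real.norm_eq_abs, abs_mul]
          calc |fn n p.1 p.2| * |Dφ p| ≤ 1 * |Dφ p| :=
            mul_le_mul_of_nonneg_right (habs n p hp) (abs_nonneg _)
          _ = |Dφ p| := one_mul _
        · rw [hDφ0 p hp]
          simp
      · apply ae_of_all
        intro p
        exact (hlim p.1 p.2).mul_const _
      · intro n
        exact ((hC1 n).continuous.mul hDφc).aestronglyMeasurable
    have hB : Tendsto (fun n => ∫ p : ℝ × ℝ, fn n p.1 p.2 * Dw p) atTop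
        (𝓝 (∫ p : ℝ × ℝ, f p.1 p.2 * Dw p)) := by
      apply tendsto_integral_of_dominated_convergence _ _ hbnd2
      · intro n
        apply ae_of_all
        intro p
        by_cases hp : p ∈ tsupport φ
        · rw [Real.norm_eq_abs, abs_mul]
          calc |fn n p.1 p.2| * |Dw p| ≤ 1 * |Dw p| :=
            mul_le_mul_of_nonneg_right (habs n p hp) (abs_nonneg _)
          _ = |Dw p| := one_mul _
        · rw [hDw0 p hp]
          simp
      · apply ae_of_all
        intro p
        exact (hlim p.1 p.2).mul_const _
      · intro n
        exact ((hC1 n).continuous.mul hDwc).aestronglyMeasurable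
    exact le_of_tendsto_of_tendsto' hA.neg hB.neg keyn
end

section
/- Let M : [0,∞)² → [0,1] be nondecreasing in each argument, continuous for h > 0, and differentiable a.e., satisfying the differential inequalities ∂M/∂β ≤ φ·M·∂M/∂h and M ≤ h·∂M/∂h + ψ·M·∂M/∂β + M², a.e. on a rectangle [β₀, β₁] × (0, h₁], with φ, ψ bounded above by constants Φ, Ψ on this rectangle, and M ≤ 1/2 there. If lim_{h→0+} M(β₀,h)/h = ∞, then there are constants c₁, c₂ > 0 such that M(β₀,h) ≥ c₁·h^{1/2} for small h > 0 and M(β, 0+) ≥ c₂·(β - β₀) for β ∈ [β₀, β₁]. -/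
/-!
Combining the two inequalities gives `M (1 - M) ≤ (h + ΦΨ M²) ∂M/∂h` on almost every line
`β = const`. This makes `h / M - h - ΦΨ M` nonincreasing in `h`, and since `h / M(β, h) → 0`
it is nonpositive; with `M ≤ 1/2` this is `M ≥ √(h / (2ΦΨ))`, first for almost every
`β > β₀` and then, by continuity, at `β₀`.

Dividing the second inequality by `ΨM` gives `(1 - M)/Ψ ≤ ∂M/∂β + (h/Ψ) ∂(log M)/∂h`.
By the square-root bound, `∂(log M)/∂h` integrates over `[β₀, β] × [ε, ρ]` to at most
`(β - β₀)(C + ½ log(1/ε))`, which grows more slowly than `∫_ε^ρ (5/8)(β - β₀) dh/h`; so at some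
`h ≤ ρ` its `β`-integral is at most `(5/8)(β - β₀)/h`. Where `M ≤ 1/8`, integrating the divided
inequality in `β` at that height gives `M(β, h) ≥ (β - β₀)/(4Ψ)`; elsewhere `M ≥ 1/8` already.
-/

open Filter MeasureTheory Set Topology
open scoped ENNReal

namespace MonotoneOn

variable {f : ℝ → ℝ} {a b : ℝ}

theorem setLIntegral_ofReal_deriv_le (hab : a ≤ b) (hf : MonotoneOn f (Icc a b)) :
    ∫⁻ x in Icc a b, ENNReal.ofReal (deriv f x) ≤ ENNReal.ofReal (f b - f a) := by
  obtain ⟨G, hGf, hG, hG'⟩ := hf.exists_tendsto_deriv_liminf_lintegral_enorm_le hab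
  calc ∫⁻ x in Icc a b, ENNReal.ofReal (deriv f x)
      ≤ ∫⁻ x in Icc a b, ‖deriv f x‖ₑ := lintegral_mono fun x => Real.ofReal_le_enorm _
    _ ≤ _ := lintegral_enorm_le_liminf_of_tendsto hGf fun n => (hG n).aemeasurable.enorm
    _ ≤ _ := hG'

theorem ofReal_mul_sub_le_add_lintegral {c : ℝ} {G : ℝ → ℝ≥0∞} (hab : a ≤ b)
    (hf : MonotoneOn f (Icc a b))
    (hG : ∀ᵐ x, x ∈ Icc a b → ENNReal.ofReal c ≤ ENNReal.ofReal (deriv f x) + G x) :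
    ENNReal.ofReal (c * (b - a)) ≤ ENNReal.ofReal (f b - f a) + ∫⁻ x in Icc a b, G x := by
  calc ENNReal.ofReal (c * (b - a))
      = ∫⁻ _ in Icc a b, ENNReal.ofReal c := by
        rw [ENNReal.ofReal_mul' (sub_nonneg.2 hab), setLIntegral_const, Real.volume_Icc]
    _ ≤ ∫⁻ x in Icc a b, (ENNReal.ofReal (deriv f x) + G x) :=
        lintegral_mono_ae ((ae_restrict_iff' measurableSet_Icc).2 hG)
    _ = (∫⁻ x in Icc a b, ENNReal.ofReal (deriv f x)) + ∫⁻ x in Icc a b, G x :=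
        lintegral_add_left (measurable_deriv f).ennreal_ofReal _
    _ ≤ _ := by gcongr; exact hf.setLIntegral_ofReal_deriv_le hab

theorem mul_sub_le_sub_of_le_deriv {c : ℝ} (hab : a ≤ b) (hf : MonotoneOn f (Icc a b))
    (hc : ∀ᵐ x, x ∈ Icc a b → c ≤ deriv f x) :
    c * (b - a) ≤ f b - f a := by
  have hmono : f a ≤ f b := hf (left_mem_Icc.2 hab) (right_mem_Icc.2 hab) hab
  have h := hf.ofReal_mul_sub_le_add_lintegral (G := 0) hab <| by
    filter_upwards [hc] with x hx hmem
    simpa using ENNReal.ofReal_le_ofReal (hx hmem)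
  simp only [Pi.zero_apply, lintegral_zero, add_zero, ENNReal.ofReal_le_ofReal_iff'] at h
  rcases h with h | h <;> linarith

theorem setLIntegral_ofReal_logDeriv_le (hab : a ≤ b) (hf : MonotoneOn f (Icc a b))
    (hpos : ∀ x ∈ Icc a b, 0 < f x) :
    ∫⁻ x in Icc a b, ENNReal.ofReal (logDeriv f x) ≤
      ENNReal.ofReal (Real.log (f b) - Real.log (f a)) := by
  have hlog : MonotoneOn (fun x => Real.log (f x)) (Icc a b) := fun x hx y hy hxy =>
    Real.log_le_log (hpos x hx) (hf hx hy hxy)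
  refine (setLIntegral_mono' measurableSet_Icc fun x hx => ?_).trans
    (hlog.setLIntegral_ofReal_deriv_le hab)
  by_cases hd : DifferentiableAt ℝ f x
  · rw [logDeriv_apply, deriv.log hd (hpos x hx).ne']
  · simp [logDeriv_eq_zero_of_not_differentiableAt f x hd]

theorem pos_of_tendsto_div_atTop (hf : MonotoneOn f (Ioi 0))
    (hlim : Tendsto (fun h => f h / h) (𝓝[>] 0) atTop) {h : ℝ} (hh : 0 < h) : 0 < f h := by
  obtain ⟨s, hs, hsh⟩ := ((hlim.eventually_gt_atTop 0).and (Ioo_mem_nhdsGT hh)).exists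
  exact (div_pos_iff_of_pos_right hsh.1 |>.1 hs).trans_le (hf hsh.1 hh hsh.2.le)

end MonotoneOn

theorem ContinuousWithinAt.le_of_ae_le {g : ℝ → ℝ} {a b y : ℝ} (hab : a < b)
    (hg : ContinuousWithinAt g (Ioi a) a) (hy : ∀ᵐ x, x ∈ Ioo a b → y ≤ g x) : y ≤ g a := by
  by_contra! hlt
  obtain ⟨c, hc, hsub⟩ := mem_nhdsGT_iff_exists_Ioo_subset.1 (hg (Iio_mem_nhds hlt))
  have hnull : volume (Ioo a (min b c)) = 0 := by
    refine measure_eq_zero_iff_ae_notMem.2 ?_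
    filter_upwards [hy] with x hx hmem
    exact (hsub ⟨hmem.1, hmem.2.trans_le (min_le_right _ _)⟩).not_ge
      (hx ⟨hmem.1, hmem.2.trans_le (min_le_left _ _)⟩)
  have hac : a < c := hc
  simp only [Real.volume_Ioo, ENNReal.ofReal_eq_zero, sub_nonpos, min_le_iff] at hnull
  rcases hnull with h | h <;> linarith

theorem exists_le_div_of_lintegral_le_log {F : ℝ → ℝ≥0∞} {P : ℝ → Prop} {a κ K ρ : ℝ}
    (hρ : 0 < ρ) (hκ₀ : 0 ≤ κ) (hκ : κ < a) (hP : ∀ᵐ h, P h)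
    (hF : ∀ ε ∈ Ioo 0 ρ, ∫⁻ h in Icc ε ρ, F h ≤ ENNReal.ofReal (K - κ * Real.log ε)) :
    ∃ h ∈ Ioc 0 ρ, P h ∧ F h ≤ ENNReal.ofReal (a / h) := by
  by_contra! hcon
  have hlow : ∀ ε ∈ Ioo 0 ρ, ENNReal.ofReal (a * (Real.log ρ - Real.log ε)) ≤
      ENNReal.ofReal (K - κ * Real.log ε) := by
    intro ε hε
    have hint : IntegrableOn (fun h => a / h) (Icc ε ρ) :=
      (continuousOn_const.div continuousOn_id fun x hx => (hε.1.trans_le hx.1).ne').integrableOn_Icc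
    have hlog : ∫ h in Icc ε ρ, a / h = a * (Real.log ρ - Real.log ε) := by
      rw [integral_Icc_eq_integral_Ioc, ← intervalIntegral.integral_of_le hε.2.le]
      simp_rw [div_eq_mul_inv]
      rw [intervalIntegral.integral_const_mul, integral_inv_of_pos hε.1 (hε.1.trans hε.2),
        Real.log_div (hε.1.trans hε.2).ne' hε.1.ne']
    refine (hF ε hε).trans' ?_
    rw [← hlog, ofReal_integral_eq_lintegral_ofReal hint]
    · refine lintegral_mono_ae ((ae_restrict_iff' measurableSet_Icc).2 ?_)
      filter_upwards [hP] with h hPh hmem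
      exact (hcon h ⟨hε.1.trans_le hmem.1, hmem.2⟩ hPh).le
    · refine (ae_restrict_iff' measurableSet_Icc).2 (ae_of_all _ fun h hmem => ?_)
      exact div_nonneg (by linarith) (hε.1.trans_le hmem.1).le
  have hev : ∀ᶠ ε in 𝓝[>] 0, ε < ρ ∧ K - a * Real.log ρ < (a - κ) * -Real.log ε :=
    (eventually_nhdsWithin_of_eventually_nhds (eventually_lt_nhds hρ)).and <|
      ((tendsto_neg_atBot_atTop.comp Real.tendsto_log_nhdsGT_zero).const_mul_atTop
        (sub_pos.2 hκ)).eventually_gt_atTop _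
  obtain ⟨ε, ⟨hερ, hbig⟩, hε⟩ := (hev.and self_mem_nhdsWithin).exists
  have hlogε : Real.log ε < Real.log ρ := Real.log_lt_log hε hερ
  rcases ENNReal.ofReal_le_ofReal_iff'.1 (hlow ε ⟨hε, hερ⟩) with h | h <;> nlinarith

theorem aemeasurable_logDeriv_of_continuousOn {u : ℝ → ℝ → ℝ}
    (hu : ContinuousOn (fun p : ℝ × ℝ => u p.1 p.2) (Ici 0 ×ˢ Ioi 0)) :
    AEMeasurable (fun p : ℝ × ℝ => logDeriv (u p.1) p.2) (volume.restrict (Ici 0 ×ˢ Ioi 0)) := by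
  refine AEMeasurable.div ?_ (hu.aemeasurable (measurableSet_Ici.prod measurableSet_Ioi))
  have hU : Ici (0 : ℝ) ×ˢ Ioi 0 = ⋃ n : ℕ, Ici 0 ×ˢ Ioi (1 / ((n : ℝ) + 1)) := by
    ext ⟨b, y⟩
    simp only [mem_prod, mem_Ici, mem_Ioi, mem_iUnion]
    exact ⟨fun ⟨hb, hy⟩ => (exists_nat_one_div_lt hy).imp fun n hn => ⟨hb, hn⟩,
      fun ⟨n, hb, hn⟩ => ⟨hb, lt_trans (by positivity) hn⟩⟩
  rw [hU, aemeasurable_iUnion_iff]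
  intro n
  set δ : ℝ := 1 / ((n : ℝ) + 1)
  have hδ : 0 < δ := by positivity
  -- Clamping `u` to `[0, ∞) × [δ, ∞)` gives a continuous function with the same derivative there.
  have hc : Continuous (Function.uncurry fun (b y : ℝ) => u (max b 0) (max y δ)) :=
    hu.comp_continuous (f := fun p : ℝ × ℝ => (max p.1 0, max p.2 δ)) (by fun_prop)
      fun p => ⟨le_max_right p.1 0, hδ.trans_le (le_max_right p.2 δ)⟩
  refine (measurable_deriv_with_param hc).aemeasurable.congr ?_
  refine (ae_restrict_iff' (measurableSet_Ici.prod measurableSet_Ioi)).2 (ae_of_all _ ?_)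
  rintro ⟨b, y⟩ ⟨hb, hy⟩
  refine Filter.EventuallyEq.deriv_eq ?_
  filter_upwards [eventually_gt_nhds hy] with z hz
  simp only [max_eq_left (mem_Ici.1 hb), max_eq_left hz.le]

section ODE

variable {f : ℝ → ℝ} {c T : ℝ}

theorem antitoneOn_div_sub_sub_mul (hc : 0 ≤ c) (hf : MonotoneOn f (Ioc 0 T))
    (hpos : ∀ h ∈ Ioc 0 T, 0 < f h)
    (hode : ∀ᵐ h, h ∈ Ioc 0 T → ∃ d, HasDerivAt f d h ∧ f h * (1 - f h) ≤ (h + c * f h ^ 2) * d) :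
    AntitoneOn (fun h => h / f h - h - c * f h) (Ioc 0 T) := by
  intro s hs t ht hst
  have hsub : Icc s t ⊆ Ioc 0 T := Icc_subset_Ioc hs.1 ht.2
  have hfs := hpos s hs
  -- For monotone functions only `∫ f' ≤ f b - f a` is available, so we pass through `m`, which is
  -- monotone and, by the differential inequality, has derivative at least `1 / f s`.
  let m : ℝ → ℝ := fun h => h * ((f s)⁻¹ - (f h)⁻¹) + h + c * f h
  have hm : MonotoneOn m (Icc s t) := by
    intro x hx y hy hxy
    have hfx := hpos x (hsub hx)
    have hfxy : f x ≤ f y := hf (hsub hx) (hsub hy) hxy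
    have h1 : (f s)⁻¹ - (f x)⁻¹ ≤ (f s)⁻¹ - (f y)⁻¹ := by gcongr
    have h2 : 0 ≤ (f s)⁻¹ - (f x)⁻¹ := sub_nonneg.2 (by gcongr; exact hf hs (hsub hx) hx.1)
    have h3 : x * ((f s)⁻¹ - (f x)⁻¹) ≤ y * ((f s)⁻¹ - (f y)⁻¹) :=
      mul_le_mul hxy h1 h2 (hs.1.le.trans (hx.1.trans hxy))
    have h4 : c * f x ≤ c * f y := mul_le_mul_of_nonneg_left hfxy hc
    simp only [m]
    linarith
  have hderiv : ∀ᵐ x, x ∈ Icc s t → (f s)⁻¹ ≤ deriv m x := by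
    filter_upwards [hode] with x hx hmem
    obtain ⟨d, hd, hineq⟩ := hx (hsub hmem)
    have hfx := hpos x (hsub hmem)
    have hm' : HasDerivAt m (((f s)⁻¹ - (f x)⁻¹) + x * (d / f x ^ 2) + 1 + c * d) x :=
      ((((hasDerivAt_id x).mul ((hasDerivAt_const x (f s)⁻¹).sub (hd.inv hfx.ne'))).add
        (hasDerivAt_id x)).add (hd.const_mul c)).congr_deriv (by simp; ring)
    rw [hm'.deriv]
    have : (f x)⁻¹ - 1 ≤ x * (d / f x ^ 2) + c * d := by
      rw [← sub_nonneg]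
      have e : x * (d / f x ^ 2) + c * d - ((f x)⁻¹ - 1)
          = ((x + c * f x ^ 2) * d - f x * (1 - f x)) / f x ^ 2 := by
        field_simp
      rw [e]
      exact div_nonneg (by linarith) (by positivity)
    linarith
  have key := hm.mul_sub_le_sub_of_le_deriv hst hderiv
  have hft := hpos t ht
  simp only [m, sub_self, mul_zero, zero_add] at key
  simp only [div_eq_mul_inv]
  nlinarith [mul_inv_cancel₀ hfs.ne']

theorem mul_one_sub_le_of_ode (hc : 0 ≤ c) (hf : MonotoneOn f (Ioc 0 T))
    (hpos : ∀ h ∈ Ioc 0 T, 0 < f h)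
    (hode : ∀ᵐ h, h ∈ Ioc 0 T → ∃ d, HasDerivAt f d h ∧ f h * (1 - f h) ≤ (h + c * f h ^ 2) * d)
    (hlim : Tendsto (fun h => f h / h) (𝓝[>] 0) atTop) {t : ℝ} (ht : t ∈ Ioc 0 T) :
    t * (1 - f t) ≤ c * f t ^ 2 := by
  have hanti := antitoneOn_div_sub_sub_mul hc hf hpos hode
  have hratio : Tendsto (fun h => h / f h) (𝓝[>] 0) (𝓝 0) := by
    convert hlim.inv_tendsto_atTop using 1
    ext h
    simp [inv_div]
  have hle : t / f t - t - c * f t ≤ 0 := by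
    refine ge_of_tendsto hratio ?_
    filter_upwards [Ioo_mem_nhdsGT ht.1] with s hs
    have hsT : s ∈ Ioc 0 T := ⟨hs.1, hs.2.le.trans ht.2⟩
    have hst : t / f t - t - c * f t ≤ s / f s - s - c * f s := hanti hsT ht hs.2.le
    have := mul_nonneg hc (hpos s hsT).le
    linarith [hs.1]
  have hft := hpos t ht
  rw [sub_sub, sub_nonpos, div_le_iff₀ hft] at hle
  linarith

end ODE

theorem sqrt_div_le_of_mul_one_sub_le {c t m : ℝ} (hc : 0 < c) (hm : 0 ≤ m) (hm2 : m ≤ 1 / 2)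
    (h : t * (1 - m) ≤ c * m ^ 2) : √(t / (2 * c)) ≤ m := by
  rw [Real.sqrt_le_left hm, div_le_iff₀ (by positivity)]
  rcases le_total 0 t with ht | ht <;> nlinarith

def PDIAt (M : ℝ → ℝ → ℝ) (Φ Ψ : ℝ) (p : ℝ × ℝ) : Prop :=
  ∃ dβ dh : ℝ, HasDerivAt (fun β => M β p.2) dβ p.1 ∧ HasDerivAt (M p.1) dh p.2 ∧
    dβ ≤ Φ * M p.1 p.2 * dh ∧ M p.1 p.2 ≤ p.2 * dh + Ψ * M p.1 p.2 * dβ + M p.1 p.2 ^ 2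

theorem PDIAt.exists_hasDerivAt_mul_one_sub_le {M : ℝ → ℝ → ℝ} {Φ Ψ : ℝ} {p : ℝ × ℝ}
    (hp : PDIAt M Φ Ψ p) (hΨ : 0 ≤ Ψ) (hM : 0 ≤ M p.1 p.2) :
    ∃ dh, HasDerivAt (M p.1) dh p.2 ∧
      M p.1 p.2 * (1 - M p.1 p.2) ≤ (p.2 + Φ * Ψ * M p.1 p.2 ^ 2) * dh := by
  obtain ⟨dβ, dh, -, hdh, h1, h2⟩ := hp
  refine ⟨dh, hdh, ?_⟩
  have := mul_le_mul_of_nonneg_left h1 (mul_nonneg hΨ hM)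
  nlinarith

section PDI

variable {M : ℝ → ℝ → ℝ} {β₀ β₁ h₁ Φ Ψ : ℝ}
  (hβ₀ : 0 ≤ β₀) (hΦ : 0 < Φ) (hΨ : 0 < Ψ)
  (hmono1 : ∀ h ≥ (0:ℝ), MonotoneOn (fun β => M β h) (Ici 0))
  (hmono2 : ∀ β ≥ (0:ℝ), MonotoneOn (M β) (Ici 0))
  (hcont : ContinuousOn (fun p : ℝ × ℝ => M p.1 p.2) (Ici 0 ×ˢ Ioi 0))
  (hhalf : ∀ β ∈ Icc β₀ β₁, ∀ h ∈ Ioc (0:ℝ) h₁, M β h ≤ 1/2)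
  (hPDI : ∀ᵐ p : ℝ × ℝ, p ∈ Icc β₀ β₁ ×ˢ Ioc (0:ℝ) h₁ → PDIAt M Φ Ψ p)
  (hlim : Tendsto (fun h => M β₀ h / h) (𝓝[>] 0) atTop)

include hβ₀ hmono1 hlim in
theorem tendsto_div_atTop_of_le {β : ℝ} (hβ : β₀ ≤ β) :
    Tendsto (fun h => M β h / h) (𝓝[>] 0) atTop := by
  refine tendsto_atTop_mono' _ ?_ hlim
  filter_upwards [self_mem_nhdsWithin] with h hh
  exact div_le_div_of_nonneg_right (hmono1 h (le_of_lt hh) hβ₀ (hβ₀.trans hβ) hβ) (le_of_lt hh)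

include hβ₀ hmono1 hmono2 hlim in
theorem pos_of_tendsto_div {β h : ℝ} (hβ : β₀ ≤ β) (hh : 0 < h) : 0 < M β h :=
  ((hmono2 β (hβ₀.trans hβ)).mono Ioi_subset_Ici_self).pos_of_tendsto_div_atTop
    (tendsto_div_atTop_of_le hβ₀ hmono1 hlim hβ) hh

include hβ₀ hΦ hΨ hmono1 hmono2 hhalf hPDI hlim in
theorem ae_sqrt_le_of_pdi :
    ∀ᵐ β, β ∈ Ioo β₀ β₁ → ∀ t ∈ Ioc 0 h₁, √(t / (2 * (Φ * Ψ))) ≤ M β t := by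
  rw [Measure.volume_eq_prod] at hPDI
  filter_upwards [Measure.ae_ae_of_ae_prod hPDI] with β hslice hβ t ht
  have hβ' : β₀ ≤ β := hβ.1.le
  have hpos : ∀ h ∈ Ioc 0 h₁, 0 < M β h := fun h hh =>
    pos_of_tendsto_div hβ₀ hmono1 hmono2 hlim hβ' hh.1
  refine sqrt_div_le_of_mul_one_sub_le (by positivity) (hpos t ht).le
    (hhalf β (Ioo_subset_Icc_self hβ) t ht) ?_
  refine mul_one_sub_le_of_ode (mul_pos hΦ hΨ).le
    ((hmono2 β (hβ₀.trans hβ')).mono fun h hh => mem_Ici.2 hh.1.le) hpos ?_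
    (tendsto_div_atTop_of_le hβ₀ hmono1 hlim hβ') ht
  filter_upwards [hslice] with h hh hmem
  exact (hh ⟨Ioo_subset_Icc_self hβ, hmem⟩).exists_hasDerivAt_mul_one_sub_le hΨ.le
    (hpos h hmem).le

include hβ₀ hΦ hΨ hmono1 hmono2 hcont hhalf hPDI hlim in
theorem sqrt_le_of_pdi (hβ : β₀ < β₁) {β t : ℝ} (hβm : β ∈ Icc β₀ β₁) (ht : t ∈ Ioc 0 h₁) :
    √(t / (2 * (Φ * Ψ))) ≤ M β t := by
  have hcw : ContinuousWithinAt (fun b => M b t) (Ioi β₀) β₀ :=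
    (hcont (β₀, t) ⟨hβ₀, ht.1⟩).comp (f := fun b => (b, t))
      (continuous_id.prodMk continuous_const).continuousWithinAt
      fun b hb => ⟨hβ₀.trans (le_of_lt hb), ht.1⟩
  have h₀ := hcw.le_of_ae_le hβ <| by
    filter_upwards [ae_sqrt_le_of_pdi hβ₀ hΦ hΨ hmono1 hmono2 hhalf hPDI hlim] with b hb hbm
    exact hb hbm t ht
  exact h₀.trans (hmono1 t ht.1.le hβ₀ (hβ₀.trans hβm.1) hβm.1)

include hβ₀ hΦ hΨ hmono1 hmono2 hcont hhalf hPDI hlim in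
theorem lintegral_lintegral_logDeriv_le (hβ : β₀ < β₁) {β ρ ε : ℝ} (hβm : β ∈ Icc β₀ β₁)
    (hρ : ρ ≤ h₁) (hsmall : ∀ β' ∈ Icc β₀ β, M β' ρ ≤ 1 / 8) (hε : ε ∈ Ioo 0 ρ) :
    ∫⁻ h in Icc ε ρ, ∫⁻ β' in Icc β₀ β, ENNReal.ofReal (logDeriv (M β') h) ≤
      ENNReal.ofReal ((β - β₀) * (Real.log (1 / 8) + Real.log (2 * (Φ * Ψ)) / 2) -
        (β - β₀) / 2 * Real.log ε) := by
  have hsub : Icc β₀ β ×ˢ Icc ε ρ ⊆ Ici 0 ×ˢ Ioi 0 := prod_mono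
    (fun b hb => mem_Ici.2 (hβ₀.trans hb.1)) (fun h hh => mem_Ioi.2 (hε.1.trans_le hh.1))
  have hmeas : AEMeasurable (Function.uncurry fun β' h => ENNReal.ofReal (logDeriv (M β') h))
      ((volume.restrict (Icc β₀ β)).prod (volume.restrict (Icc ε ρ))) := by
    rw [Measure.prod_restrict, ← Measure.volume_eq_prod]
    exact ((aemeasurable_logDeriv_of_continuousOn hcont).mono_set hsub).ennreal_ofReal
  have hε0 : 0 < ε := hε.1
  have hpos : ∀ β' ∈ Icc β₀ β, ∀ h ∈ Icc ε ρ, 0 < M β' h := fun β' hβ' h hh =>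
    pos_of_tendsto_div hβ₀ hmono1 hmono2 hlim hβ'.1 (hε.1.trans_le hh.1)
  rw [← lintegral_lintegral_swap hmeas]
  calc ∫⁻ β' in Icc β₀ β, ∫⁻ h in Icc ε ρ, ENNReal.ofReal (logDeriv (M β') h)
      ≤ ∫⁻ β' in Icc β₀ β, ENNReal.ofReal
          (Real.log (1 / 8) + Real.log (2 * (Φ * Ψ)) / 2 - Real.log ε / 2) := by
        refine setLIntegral_mono' measurableSet_Icc fun β' hβ' => ?_
        refine ((((hmono2 β' (hβ₀.trans hβ'.1)).mono fun h hh =>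
          mem_Ici.2 (hε.1.le.trans hh.1))).setLIntegral_ofReal_logDeriv_le hε.2.le
          (hpos β' hβ')).trans (ENNReal.ofReal_le_ofReal ?_)
        have hβ'm : β' ∈ Icc β₀ β₁ := ⟨hβ'.1, hβ'.2.trans hβm.2⟩
        have hρ' := Real.log_le_log (hpos β' hβ' ρ (right_mem_Icc.2 hε.2.le)) (hsmall β' hβ')
        have hε' := Real.log_le_log (by positivity)
          (sqrt_le_of_pdi hβ₀ hΦ hΨ hmono1 hmono2 hcont hhalf hPDI hlim hβ hβ'm
            ⟨hε.1, hε.2.le.trans hρ⟩)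
        rw [Real.log_sqrt (by positivity), Real.log_div hε.1.ne' (by positivity)] at hε'
        linarith
    _ = _ := by
        rw [setLIntegral_const, Real.volume_Icc, ← ENNReal.ofReal_mul' (sub_nonneg.2 hβm.1)]
        ring_nf

include hβ₀ hΨ hmono1 hmono2 hlim in
theorem ofReal_mul_le_of_pdi {β h : ℝ} (hβ : β₀ ≤ β) (hh : 0 < h)
    (hsmall : ∀ β' ∈ Icc β₀ β, M β' h ≤ 1 / 8)
    (hslice : ∀ᵐ β', β' ∈ Icc β₀ β → PDIAt M Φ Ψ (β', h)) :
    ENNReal.ofReal (7 / (8 * Ψ) * (β - β₀)) ≤ ENNReal.ofReal (M β h - M β₀ h) +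
      ENNReal.ofReal (h / Ψ) * ∫⁻ β' in Icc β₀ β, ENNReal.ofReal (logDeriv (M β') h) := by
  rw [← lintegral_const_mul' _ _ ENNReal.ofReal_ne_top]
  have hmono : MonotoneOn (fun b => M b h) (Icc β₀ β) :=
    (hmono1 h hh.le).mono fun b hb => mem_Ici.2 (hβ₀.trans hb.1)
  refine hmono.ofReal_mul_sub_le_add_lintegral hβ ?_
  filter_upwards [hslice] with β' hβ' hmem
  obtain ⟨dβ, dh, hdβ, hdh, -, hineq⟩ := hβ' hmem
  have hm := pos_of_tendsto_div hβ₀ hmono1 hmono2 hlim hmem.1 hh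
  have hm8 := hsmall β' hmem
  rw [hdβ.deriv, logDeriv_apply, hdh.deriv,
    ← ENNReal.ofReal_mul (div_nonneg hh.le hΨ.le)]
  refine (ENNReal.ofReal_le_ofReal ?_).trans ENNReal.ofReal_add_le
  simp only at hineq
  -- divide the second inequality by `Ψ * M` and use `1 - M ≥ 7/8`
  have e : dβ + h / Ψ * (dh / M β' h) = (Ψ * M β' h * dβ + h * dh) / (Ψ * M β' h) := by
    field_simp
  rw [e, le_div_iff₀ (by positivity)]
  field_simp
  nlinarith

include hβ₀ hΦ hΨ hmono1 hmono2 hcont hhalf hPDI hlim in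
theorem exists_div_le_of_pdi (hβ : β₀ < β₁) {β δ₀ ρ : ℝ} (hβm : β ∈ Ioc β₀ β₁) (hδ₀ : δ₀ ≤ h₁)
    (hsmall : M β δ₀ ≤ 1 / 8) (hρ : ρ ∈ Ioc 0 δ₀) :
    ∃ h ∈ Ioc 0 ρ, (β - β₀) / (4 * Ψ) ≤ M β h := by
  have hsmall' : ∀ β' ∈ Icc β₀ β, ∀ h ∈ Ioc 0 δ₀, M β' h ≤ 1 / 8 := fun β' hβ' h hh =>
    ((hmono2 β' (hβ₀.trans hβ'.1)) (le_of_lt hh.1) (hh.1.le.trans hh.2) hh.2).trans <|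
      (hmono1 δ₀ (hh.1.le.trans hh.2) (hβ₀.trans hβ'.1) (hβ₀.trans hβm.1.le) hβ'.2).trans hsmall
  have hslices : ∀ᵐ h, ∀ᵐ β', (β', h) ∈ Icc β₀ β₁ ×ˢ Ioc 0 h₁ → PDIAt M Φ Ψ (β', h) := by
    rw [Measure.volume_eq_prod] at hPDI
    exact Measure.ae_ae_of_ae_prod (Measure.measurePreserving_swap.quasiMeasurePreserving.ae hPDI)
  have hβ0 : 0 < β - β₀ := sub_pos.2 hβm.1
  obtain ⟨h, hh, hgood, hF⟩ := exists_le_div_of_lintegral_le_log (a := 5 / 8 * (β - β₀))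
    hρ.1 (by positivity) (by linarith) hslices fun ε hε =>
      lintegral_lintegral_logDeriv_le hβ₀ hΦ hΨ hmono1 hmono2 hcont hhalf hPDI hlim hβ
        (Ioc_subset_Icc_self hβm) (hρ.2.trans hδ₀)
        (fun β' hβ' => hsmall' β' hβ' ρ hρ) hε
  refine ⟨h, hh, ?_⟩
  have h0 : 0 < h := hh.1
  have hhδ : h ∈ Ioc 0 δ₀ := ⟨hh.1, hh.2.trans hρ.2⟩
  have key : ENNReal.ofReal (7 / (8 * Ψ) * (β - β₀)) ≤ ENNReal.ofReal (M β h - M β₀ h) +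
      ENNReal.ofReal (h / Ψ) * ENNReal.ofReal (5 / 8 * (β - β₀) / h) := by
    refine (ofReal_mul_le_of_pdi (Φ := Φ) hβ₀ hΨ hmono1 hmono2 hlim hβm.1.le h0
      (fun β' hβ' => hsmall' β' hβ' h hhδ) ?_).trans (by gcongr)
    filter_upwards [hgood] with β' hβ' hmem
    exact hβ' ⟨⟨hmem.1, hmem.2.trans hβm.2⟩, h0, hhδ.2.trans hδ₀⟩
  have hM₀ := pos_of_tendsto_div hβ₀ hmono1 hmono2 hlim le_rfl hh.1
  have hMβ : M β₀ h ≤ M β h := hmono1 h hh.1.le hβ₀ (hβ₀.trans hβm.1.le) hβm.1.le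
  rw [← ENNReal.ofReal_mul (by positivity), ← ENNReal.ofReal_add (by linarith) (by positivity),
    ENNReal.ofReal_le_ofReal_iff (by positivity)] at key
  have e : h / Ψ * (5 / 8 * (β - β₀) / h) = 7 / (8 * Ψ) * (β - β₀) - (β - β₀) / (4 * Ψ) := by
    field_simp
    ring
  linarith

include hβ₀ hΦ hΨ hmono1 hmono2 hcont hhalf hPDI hlim in
theorem eventually_mul_le_of_pdi (hβ : β₀ < β₁) (hh₁ : 0 < h₁) {β : ℝ} (hβm : β ∈ Icc β₀ β₁) :
    ∀ᶠ h in 𝓝[>] 0, min (1 / (8 * (β₁ - β₀))) (1 / (4 * Ψ)) * (β - β₀) ≤ M β h := by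
  rcases hβm.1.eq_or_lt with rfl | hlt
  · filter_upwards [self_mem_nhdsWithin] with h hh
    simpa using (pos_of_tendsto_div hβ₀ hmono1 hmono2 hlim le_rfl hh).le
  have hβ0 : 0 ≤ β - β₀ := sub_nonneg.2 hβm.1
  by_cases hδ : ∃ δ₀ ∈ Ioc 0 h₁, M β δ₀ ≤ 1 / 8
  · obtain ⟨δ₀, hδ₀, hsmall⟩ := hδ
    filter_upwards [Ioo_mem_nhdsGT hδ₀.1] with ρ hρ
    obtain ⟨h, hh, hle⟩ := exists_div_le_of_pdi hβ₀ hΦ hΨ hmono1 hmono2 hcont hhalf hPDI hlim hβ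
      ⟨hlt, hβm.2⟩ hδ₀.2 hsmall ⟨hρ.1, hρ.2.le⟩
    calc min (1 / (8 * (β₁ - β₀))) (1 / (4 * Ψ)) * (β - β₀)
        ≤ 1 / (4 * Ψ) * (β - β₀) := mul_le_mul_of_nonneg_right (min_le_right _ _) hβ0
      _ = (β - β₀) / (4 * Ψ) := by ring
      _ ≤ M β h := hle
      _ ≤ M β ρ := hmono2 β (hβ₀.trans hβm.1) hh.1.le hρ.1.le hh.2
  · push Not at hδ
    filter_upwards [Ioo_mem_nhdsGT hh₁] with h hh
    have hβ₁ : 0 < β₁ - β₀ := sub_pos.2 hβ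
    calc min (1 / (8 * (β₁ - β₀))) (1 / (4 * Ψ)) * (β - β₀)
        ≤ 1 / (8 * (β₁ - β₀)) * (β₁ - β₀) :=
          mul_le_mul (min_le_left _ _) (by linarith [hβm.2]) hβ0 (by positivity)
      _ = 1 / 8 := by field_simp
      _ ≤ M β h := (hδ h ⟨hh.1, hh.2.le⟩).le

end PDI

theorem stmt17_general (M : ℝ → ℝ → ℝ) (β₀ β₁ h₁ Φ Ψ : ℝ)
    (hβ : β₀ < β₁) (hβ₀ : 0 ≤ β₀) (hh₁ : 0 < h₁) (hΦ : 0 < Φ) (hΨ : 0 < Ψ)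
    (hmono1 : ∀ h ≥ (0:ℝ), MonotoneOn (fun β => M β h) (Set.Ici 0))
    (hmono2 : ∀ β ≥ (0:ℝ), MonotoneOn (M β) (Set.Ici 0))
    (hcont : ContinuousOn (fun p : ℝ × ℝ => M p.1 p.2) (Set.Ici 0 ×ˢ Set.Ioi 0))
    (hhalf : ∀ β ∈ Set.Icc β₀ β₁, ∀ h ∈ Set.Ioc (0:ℝ) h₁, M β h ≤ 1/2)
    (hPDI : ∀ᵐ p : ℝ × ℝ ∂(volume : Measure (ℝ × ℝ)),
      p ∈ Set.Icc β₀ β₁ ×ˢ Set.Ioc (0:ℝ) h₁ →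
      ∃ dβ dh : ℝ,
        HasDerivAt (fun β => M β p.2) dβ p.1 ∧
        HasDerivAt (M p.1) dh p.2 ∧
        dβ ≤ Φ * M p.1 p.2 * dh ∧
        M p.1 p.2 ≤ p.2 * dh + Ψ * M p.1 p.2 * dβ + (M p.1 p.2) ^ 2)
    (hlim : Tendsto (fun h => M β₀ h / h) (nhdsWithin 0 (Set.Ioi 0)) atTop) :
    (∃ c₁ > (0:ℝ), ∃ h₀ > (0:ℝ), ∀ h ∈ Set.Ioc (0:ℝ) h₀,
        c₁ * Real.sqrt h ≤ M β₀ h) ∧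
    (∃ c₂ > (0:ℝ), ∀ β ∈ Set.Icc β₀ β₁, ∀ L : ℝ,
        Tendsto (M β) (nhdsWithin 0 (Set.Ioi 0)) (nhds L) →
          c₂ * (β - β₀) ≤ L) := by
  have hβ₁ : 0 < β₁ - β₀ := sub_pos.2 hβ
  refine ⟨⟨√((2 * (Φ * Ψ))⁻¹), by positivity, h₁, hh₁, fun h hh => ?_⟩,
    ⟨min (1 / (8 * (β₁ - β₀))) (1 / (4 * Ψ)), lt_min (by positivity) (by positivity),
      fun β hβm L hL => ge_of_tendsto hL
        (eventually_mul_le_of_pdi hβ₀ hΦ hΨ hmono1 hmono2 hcont hhalf hPDI hlim hβ hh₁ hβm)⟩⟩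
  rw [← Real.sqrt_mul (by positivity), inv_mul_eq_div]
  exact sqrt_le_of_pdi hβ₀ hΦ hΨ hmono1 hmono2 hcont hhalf hPDI hlim hβ (left_mem_Icc.2 hβ.le) hh

/-- Aizenman–Barsky PDI analysis (Proposition 4.2, case `a = 1`): if the
order parameter `M(β,h) ∈ [0,1]` is nondecreasing in each argument, continuous
for `h > 0`, bounded by `1/2` on the rectangle `[β₀,β₁] × (0,h₁]`, and satisfies
a.e. there the inequalities `∂M/∂β ≤ Φ M ∂M/∂h` and
`M ≤ h ∂M/∂h + Ψ M ∂M/∂β + M²`, and if `M(β₀,h)/h → ∞` as `h → 0+`, then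
`M(β₀,h) ≥ c₁ h^{1/2}` for small `h` and `M(β,0+) ≥ c₂ (β-β₀)` on `[β₀,β₁]`. -/
theorem stmt17 (M : ℝ → ℝ → ℝ) (β₀ β₁ h₁ Φ Ψ : ℝ)
    (hβ : β₀ < β₁) (hβ₀ : 0 ≤ β₀) (hh₁ : 0 < h₁) (hΦ : 0 < Φ) (hΨ : 0 < Ψ)
    (hmono1 : ∀ h ≥ (0:ℝ), MonotoneOn (fun β => M β h) (Set.Ici 0))
    (hmono2 : ∀ β ≥ (0:ℝ), MonotoneOn (M β) (Set.Ici 0))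
    (hrange : ∀ β ≥ (0:ℝ), ∀ h ≥ (0:ℝ), M β h ∈ Set.Icc (0:ℝ) 1)
    (hcont : ContinuousOn (fun p : ℝ × ℝ => M p.1 p.2) (Set.Ici 0 ×ˢ Set.Ioi 0))
    (hhalf : ∀ β ∈ Set.Icc β₀ β₁, ∀ h ∈ Set.Ioc (0:ℝ) h₁, M β h ≤ 1/2)
    (hPDI : ∀ᵐ p : ℝ × ℝ ∂(volume : Measure (ℝ × ℝ)),
      p ∈ Set.Icc β₀ β₁ ×ˢ Set.Ioc (0:ℝ) h₁ →
      ∃ dβ dh : ℝ,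
        HasDerivAt (fun β => M β p.2) dβ p.1 ∧
        HasDerivAt (M p.1) dh p.2 ∧
        dβ ≤ Φ * M p.1 p.2 * dh ∧
        M p.1 p.2 ≤ p.2 * dh + Ψ * M p.1 p.2 * dβ + (M p.1 p.2) ^ 2)
    (hlim : Tendsto (fun h => M β₀ h / h) (nhdsWithin 0 (Set.Ioi 0)) atTop) :
    (∃ c₁ > (0:ℝ), ∃ h₀ > (0:ℝ), ∀ h ∈ Set.Ioc (0:ℝ) h₀,
        c₁ * Real.sqrt h ≤ M β₀ h) ∧
    (∃ c₂ > (0:ℝ), ∀ β ∈ Set.Icc β₀ β₁, ∀ L : ℝ,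
        Tendsto (M β) (nhdsWithin 0 (Set.Ioi 0)) (nhds L) →
          c₂ * (β - β₀) ≤ L) :=
  stmt17_general M β₀ β₁ h₁ Φ Ψ hβ hβ₀ hh₁ hΦ hΨ hmono1 hmono2 hcont hhalf hPDI hlim
end
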